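/- arXiv:1111.7276 — 3 statements merged into one kernel-verified Lean document; each statement's English description precedes it below -/
import Mathlib

section
/- (a) For every Φ ∈ H(G,K,V*) and every m ∈ M, the formula 𝒮(Φ)(m)(λ) := Σ_{n(N∩K) ∈ N/(N∩K)} Φ(mn)(λ), for λ ∈ (V*)^{N∩K}, has only finitely many nonzero terms, is independent of the coset representatives, maps (V*)^{N∩K} into itself, and defines an element 𝒮(Φ) of H(M, K∩M, (V*)^{N∩K}). (b) For every Φ ∈ H(G,K,V*), every m ∈ M, every v ∈ V and every λ ∈ (V*)^{N∩K}, one has λ(𝒮'(ι(Φ))(m)(v̄)) = (𝒮(Φ)(m⁻¹)(λ))(v), where on the left λ is viewed as a linear form on V_{K∩N}; equivalently, ι_M ∘ 𝒮 = 𝒮' ∘ ι as maps H(G,K,V*) → H(M, K∩M, V_{K∩N}). -/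
/-!
The summand `Φ(mn)(λ)` only depends on the coset `n(N∩K)` because `λ` is `N∩K`-fixed, so any
bijection of `N` permuting these cosets leaves the sum unchanged: left translation by
`m⁻¹n'm` (`n' ∈ N∩K`) gives invariance, conjugation by `k' ∈ K∩M` gives equivariance. By (A1)
the support of `Φ` lies in finitely many cosets `tK`, and `n(N∩K) ↦ mnK` is injective, so the
sum is finite. If `Φ(mn) ≠ 0` then `mn ∈ K·t` with `t = k_t m_t n_t`, and uniqueness of the
`M·N` decomposition together with `K∩P = (K∩M)(K∩N)` forces `m ∈ (K∩M)m_t`. Part (b) is the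
bijection `(N∩K)n ↦ n⁻¹(N∩K)` between right and left cosets, with `λ(uᵗv) = (uλ)(v)`.
-/

open scoped Classical

noncomputable section
namespace Paper

variable {C : Type} [Field C] {G : Type} [Group G]

/-- Hecke algebra H(G,K,V) as a submodule of `G → End V`. -/
def Hecke (K : Subgroup G) {V : Type} [AddCommGroup V] [Module C V]
    (ρ : Representation C ↥K V) : Submodule C (G → Module.End C V) where
  carrier := {Φ | (∀ (k k' : ↥K) (g : G), Φ (↑k * g * ↑k') = ρ k * Φ g * ρ k') ∧
    ∃ S : Finset G, ∀ g : G, Φ g ≠ 0 → ∃ s ∈ S, ∃ k ∈ K, ∃ k' ∈ K, g = k * s * k'}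
  add_mem' := by
    rintro a b ⟨ha1, Sa, ha2⟩ ⟨hb1, Sb, hb2⟩
    refine ⟨fun k k' g => by simp [ha1 k k' g, hb1 k k' g, mul_add, add_mul],
      Sa ∪ Sb, fun g hg => ?_⟩
    by_cases h : a g ≠ 0
    · obtain ⟨s, hs, hrest⟩ := ha2 g h
      exact ⟨s, Finset.mem_union_left _ hs, hrest⟩
    · push_neg at h
      have hbg : b g ≠ 0 := by
        intro hb0; apply hg; simp only [Pi.add_apply, h, hb0, add_zero]
      obtain ⟨s, hs, hrest⟩ := hb2 g hbg
      exact ⟨s, Finset.mem_union_right _ hs, hrest⟩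
  zero_mem' := ⟨fun k k' g => by simp, ∅, fun g hg => absurd rfl hg⟩
  smul_mem' := by
    rintro c a ⟨ha1, Sa, ha2⟩
    refine ⟨fun k k' g => by
      simp only [Pi.smul_apply, ha1 k k' g, mul_smul_comm, smul_mul_assoc],
      Sa, fun g hg => ?_⟩
    refine ha2 g (fun h0 => hg ?_)
    simp only [Pi.smul_apply, h0, smul_zero]

/-- The subspace of `V` spanned by the elements `ρ(n)v - v`, `n ∈ K ⊓ N`. -/
def coinvKer (K N : Subgroup G) {V : Type} [AddCommGroup V] [Module C V]
    (ρ : Representation C ↥K V) : Submodule C V :=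
  Submodule.span C {x | ∃ (n : G) (hn : n ∈ K ⊓ N) (v : V), x = ρ ⟨n, hn.1⟩ v - v}

/-- Transpose of an endomorphism of the dual, as an endomorphism of `V`. -/
def transEnd {V : Type} [AddCommGroup V] [Module C V] [FiniteDimensional C V]
    (u : Module.End C (Module.Dual C V)) : Module.End C V :=
  (Module.evalEquiv C V).symm.toLinearMap ∘ₗ u.dualMap ∘ₗ (Module.evalEquiv C V).toLinearMap

/-- The `N ⊓ K`-fixed linear forms `(V^*)^{N ⊓ K}`. -/
def dualInv (K N : Subgroup G) {V : Type} [AddCommGroup V] [Module C V]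
    (ρ : Representation C ↥K V) : Submodule C (Module.Dual C V) where
  carrier := {l | ∀ (n : G) (hn : n ∈ K ⊓ N), ρ.dual ⟨n, hn.1⟩ l = l}
  add_mem' := by intro a b ha hb n hn; rw [map_add, ha n hn, hb n hn]
  zero_mem' := by intro n hn; rw [map_zero]
  smul_mem' := by intro c a ha n hn; rw [map_smul, ha n hn]

section CosetSums

variable {H X : Type} [Group H] {s : Subgroup H} {F : H → X}

theorem apply_eq_of_mk_eq (hF : ∀ a, ∀ c ∈ s, F (a * c) = F a) {a b : H}
    (h : (a : H ⧸ s) = b) : F a = F b := by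
  rw [← hF a _ (QuotientGroup.eq.1 h), mul_inv_cancel_left]

theorem finsum_out_comp_equiv [AddCommMonoid X] (hF : ∀ a, ∀ c ∈ s, F (a * c) = F a) (φ : H ≃ H)
    (hφ : ∀ a b, a⁻¹ * b ∈ s ↔ (φ a)⁻¹ * φ b ∈ s) :
    ∑ᶠ q : H ⧸ s, F (φ q.out) = ∑ᶠ q : H ⧸ s, F q.out := by
  let e : H ⧸ s ≃ H ⧸ s := Quotient.congr φ fun a b => by
    simpa only [← QuotientGroup.leftRel_apply] using hφ a b
  calc ∑ᶠ q : H ⧸ s, F (φ q.out) = ∑ᶠ q, F (e q).out := by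
        refine finsum_congr fun q => apply_eq_of_mk_eq hF ?_
        rw [QuotientGroup.out_eq' (e q)]
        conv_rhs => rw [← QuotientGroup.out_eq' q]
        rfl
    _ = ∑ᶠ q : H ⧸ s, F q.out := finsum_comp_equiv e (f := fun q => F q.out)

theorem exists_out_inv_eq_out_mul (q : Quotient (QuotientGroup.rightRel s)) :
    ∃ c ∈ s, q.out⁻¹ = (QuotientGroup.quotientRightRelEquivQuotientLeftRel s q).out * c := by
  have hq : ((q.out⁻¹ : H) : H ⧸ s) = QuotientGroup.quotientRightRelEquivQuotientLeftRel s q := by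
    conv_rhs => rw [← Quotient.out_eq q]
    rfl
  refine ⟨_, QuotientGroup.eq.1 (hq.trans (QuotientGroup.out_eq' _).symm).symm, ?_⟩
  rw [mul_inv_cancel_left]

end CosetSums

theorem finite_setOf_mul_out_ne_zero {X : Type} [Zero X] {K N : Subgroup G} {f : G → X}
    (T : Finset G) (hT : ∀ g, f g ≠ 0 → ∃ t ∈ T, ∃ k ∈ K, g = t * k) (g₀ : G) :
    {q : N ⧸ (K ⊓ N).subgroupOf N | f (g₀ * q.out) ≠ 0}.Finite := by
  have hinj : Set.InjOn (fun q : N ⧸ (K ⊓ N).subgroupOf N => ((g₀ * q.out : G) : G ⧸ K))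
      {q | f (g₀ * q.out) ≠ 0} := by
    intro q _ q' _ h
    rw [← QuotientGroup.out_eq' q, ← QuotientGroup.out_eq' q', QuotientGroup.eq,
      Subgroup.mem_subgroupOf]
    have hK := QuotientGroup.eq.1 h
    simp only [mul_inv_rev, mul_assoc, inv_mul_cancel_left] at hK
    exact ⟨by simpa using hK, (q.out⁻¹ * q'.out).2⟩
  refine Set.Finite.of_finite_image ?_ hinj
  refine (T.image (QuotientGroup.mk : G → G ⧸ K)).finite_toSet.subset ?_
  rintro _ ⟨q, hq, rfl⟩
  obtain ⟨t, ht, k, hk, h⟩ := hT _ hq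
  refine Finset.mem_image.2 ⟨t, ht, ?_⟩
  show (t : G ⧸ K) = ((g₀ * q.out : G) : G ⧸ K)
  rw [h, QuotientGroup.eq]
  simpa using hk

section SemidirectProduct

variable {K P M N : Subgroup G}

theorem le_normalizer_of_conj_mem (hNnormal : ∀ p ∈ P, ∀ n' ∈ N, p * n' * p⁻¹ ∈ N) :
    P ≤ Subgroup.normalizer (N : Set G) := fun p hp =>
  Subgroup.mem_normalizer_iff.2 fun n => ⟨hNnormal p hp n, fun h => by
    simpa [mul_assoc] using hNnormal p⁻¹ (P.inv_mem hp) _ h⟩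

theorem exists_mem_mul_mul (hG : ∀ g : G, ∃ k ∈ K, ∃ p ∈ P, g = k * p)
    (hPprod : ∀ p ∈ P, ∃ m ∈ M, ∃ n' ∈ N, p = m * n') (g : G) :
    ∃ k ∈ K, ∃ m ∈ M, ∃ n ∈ N, g = k * (m * n) := by
  obtain ⟨k, hk, p, hp, rfl⟩ := hG g
  obtain ⟨m, hm, n, hn, rfl⟩ := hPprod p hp
  exact ⟨k, hk, m, hm, n, hn, rfl⟩

theorem eq_of_mul_eq_mul (hMN : M ⊓ N = ⊥) {m m' n n' : G} (hm : m ∈ M) (hm' : m' ∈ M)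
    (hn : n ∈ N) (hn' : n' ∈ N) (h : m * n = m' * n') : m = m' :=
  congrArg (fun x : M × N => (x.1 : G)) (Subgroup.mul_injective_of_disjoint
    (disjoint_iff.2 hMN) (a₁ := (⟨m, hm⟩, ⟨n, hn⟩)) (a₂ := (⟨m', hm'⟩, ⟨n', hn'⟩)) h)

theorem exists_mem_inf_mul_of_mul_eq (hMP : M ≤ P) (hNP : N ≤ P)
    (hPN : P ≤ Subgroup.normalizer (N : Set G)) (hMN : M ⊓ N = ⊥)
    (hKP : ∀ x ∈ K ⊓ P, ∃ m ∈ K ⊓ M, ∃ n' ∈ K ⊓ N, x = m * n')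
    {m n k m' n' : G} (hm : m ∈ M) (hn : n ∈ N) (hk : k ∈ K) (hm' : m' ∈ M) (hn' : n' ∈ N)
    (h : m * n = k * (m' * n')) : ∃ a ∈ K ⊓ M, m = a * m' := by
  have hkP : k ∈ P := by
    rw [show k = m * n * (m' * n')⁻¹ by rw [h, mul_inv_cancel_right]]
    exact P.mul_mem (P.mul_mem (hMP hm) (hNP hn))
      (P.inv_mem (P.mul_mem (hMP hm') (hNP hn')))
  obtain ⟨a, ha, b, hb, rfl⟩ := hKP k ⟨hk, hkP⟩
  have hb' : m'⁻¹ * b * m' ∈ N := (Subgroup.mem_normalizer_iff''.1 (hPN (hMP hm')) b).1 hb.2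
  refine ⟨a, ha, eq_of_mul_eq_mul hMN hm (M.mul_mem ha.2 hm') hn (N.mul_mem hb' hn') ?_⟩
  rw [h]
  group

end SemidirectProduct

def FinitelyManyLeftCosetsInDoubleCosets (K : Subgroup G) : Prop :=
  ∀ g : G, ∃ S : Finset G, ∀ x : G,
    (∃ k ∈ K, ∃ k' ∈ K, x = k * g * k') → ∃ s ∈ S, ∃ k ∈ K, x = s * k

def FinitelyManyRightCosetsInDoubleCosets (K : Subgroup G) : Prop :=
  ∀ g : G, ∃ S : Finset G, ∀ x : G,
    (∃ k ∈ K, ∃ k' ∈ K, x = k * g * k') → ∃ s ∈ S, ∃ k ∈ K, x = k * s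

section Hecke

variable {W : Type} [AddCommGroup W] [Module C W] {K N : Subgroup G}
  {σ : Representation C K W} {Φ : G → Module.End C W}

theorem hecke_mul_right (hΦ : Φ ∈ Hecke K σ) (g : G) (k : K) : Φ (g * k) = Φ g * σ k := by
  simpa using hΦ.1 1 k g

theorem hecke_mul_left (hΦ : Φ ∈ Hecke K σ) (k : K) (g : G) : Φ (k * g) = σ k * Φ g := by
  simpa using hΦ.1 k 1 g

theorem exists_finset_cover_support (hΦ : Φ ∈ Hecke K σ) {R : G → G → Prop}
    (hA : ∀ g : G, ∃ S : Finset G, ∀ x : G,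
      (∃ k ∈ K, ∃ k' ∈ K, x = k * g * k') → ∃ s ∈ S, R x s) :
    ∃ T : Finset G, ∀ g, Φ g ≠ 0 → ∃ t ∈ T, R g t := by
  obtain ⟨S, hS⟩ := hΦ.2
  choose T hT using hA
  refine ⟨S.biUnion T, fun g hg => ?_⟩
  obtain ⟨s, hs, k, hk, k', hk', rfl⟩ := hS g hg
  obtain ⟨t, ht, hR⟩ := hT s _ ⟨k, hk, k', hk', rfl⟩
  exact ⟨t, Finset.mem_biUnion.2 ⟨s, hs, ht⟩, hR⟩

theorem hecke_finite_setOf_mul_out_ne_zero (hΦ : Φ ∈ Hecke K σ)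
    (hA1' : FinitelyManyLeftCosetsInDoubleCosets K) (g : G) :
    {q : N ⧸ (K ⊓ N).subgroupOf N | Φ (g * q.out) ≠ 0}.Finite := by
  obtain ⟨T, hT⟩ := exists_finset_cover_support hΦ hA1'
  exact finite_setOf_mul_out_ne_zero T hT g

theorem hecke_finite_support_mul_out (hΦ : Φ ∈ Hecke K σ)
    (hA1' : FinitelyManyLeftCosetsInDoubleCosets K) (g : G) (w : W) :
    (Function.support fun q : N ⧸ (K ⊓ N).subgroupOf N => Φ (g * q.out) w).Finite :=
  (hecke_finite_setOf_mul_out_ne_zero hΦ hA1' g).subset fun q hq h => hq (by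
    simp only [h, LinearMap.zero_apply])

variable (K N σ) in
def IsInvariant (w : W) : Prop :=
  ∀ n (hn : n ∈ K ⊓ N), σ ⟨n, hn.1⟩ w = w

theorem hecke_apply_mul_of_mem (hΦ : Φ ∈ Hecke K σ) {w : W} (hw : IsInvariant K N σ w)
    (g : G) {c : G} (hc : c ∈ K ⊓ N) : Φ (g * c) w = Φ g w := by
  rw [hecke_mul_right hΦ g ⟨c, hc.1⟩, Module.End.mul_apply, hw c hc]

theorem hecke_apply_mul_coe_mul (hΦ : Φ ∈ Hecke K σ) {w : W} (hw : IsInvariant K N σ w)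
    (g : G) : ∀ a : N, ∀ c ∈ (K ⊓ N).subgroupOf N, Φ (g * ↑(a * c)) w = Φ (g * a) w :=
  fun a c hc => by
    rw [Subgroup.coe_mul, ← mul_assoc]
    exact hecke_apply_mul_of_mem hΦ hw _ hc

theorem IsInvariant.apply {w : W} (hw : IsInvariant K N σ w) {k : G} (hk : k ∈ K)
    (hkN : k ∈ Subgroup.normalizer (N : Set G)) : IsInvariant K N σ (σ ⟨k, hk⟩ w) := by
  intro n hn
  have hc : k⁻¹ * n * k ∈ K ⊓ N :=
    ⟨by simpa [mul_assoc] using K.mul_mem (K.mul_mem (K.inv_mem hk) hn.1) hk,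
      (Subgroup.mem_normalizer_iff''.1 hkN n).1 hn.2⟩
  have hcomm : (⟨n, hn.1⟩ : K) * ⟨k, hk⟩ = ⟨k, hk⟩ * ⟨k⁻¹ * n * k, hc.1⟩ :=
    Subtype.ext (by simp [mul_assoc])
  rw [← Module.End.mul_apply, ← map_mul, hcomm, map_mul, Module.End.mul_apply, hw _ hc]

variable (K N) in
def satakeSum (Φ : G → Module.End C W) (g : G) (w : W) : W :=
  ∑ᶠ q : N ⧸ (K ⊓ N).subgroupOf N, Φ (g * q.out) w

theorem finsum_eq_satakeSum (hΦ : Φ ∈ Hecke K σ) {w : W} (hw : IsInvariant K N σ w) (g : G)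
    (rep : N ⧸ (K ⊓ N).subgroupOf N → N) (hrep : ∀ q, (rep q : N ⧸ (K ⊓ N).subgroupOf N) = q) :
    ∑ᶠ q : N ⧸ (K ⊓ N).subgroupOf N, Φ (g * rep q) w = satakeSum K N Φ g w :=
  finsum_congr fun q =>
    apply_eq_of_mk_eq (F := fun a : N => Φ (g * a) w) (hecke_apply_mul_coe_mul hΦ hw g) (by rw [hrep, QuotientGroup.out_eq'])

theorem map_satakeSum (hΦ : Φ ∈ Hecke K σ) (hA1' : FinitelyManyLeftCosetsInDoubleCosets K)
    {Y : Type} [AddCommGroup Y] [Module C Y] (u : W →ₗ[C] Y) (g : G) (w : W) :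
    u (satakeSum K N Φ g w) = ∑ᶠ q : N ⧸ (K ⊓ N).subgroupOf N, u (Φ (g * q.out) w) :=
  map_finsum u (hecke_finite_support_mul_out hΦ hA1' g w)

theorem satakeSum_add (hΦ : Φ ∈ Hecke K σ) (hA1' : FinitelyManyLeftCosetsInDoubleCosets K)
    (g : G) (w w' : W) :
    satakeSum K N Φ g (w + w') = satakeSum K N Φ g w + satakeSum K N Φ g w' := by
  simp only [satakeSum, map_add]
  exact finsum_add_distrib (hecke_finite_support_mul_out hΦ hA1' g w)
    (hecke_finite_support_mul_out hΦ hA1' g w')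

theorem satakeSum_smul (hΦ : Φ ∈ Hecke K σ) (hA1' : FinitelyManyLeftCosetsInDoubleCosets K)
    (g : G) (c : C) (w : W) : satakeSum K N Φ g (c • w) = c • satakeSum K N Φ g w := by
  simp only [satakeSum, map_smul]
  exact (smul_finsum' c (hecke_finite_support_mul_out hΦ hA1' g w)).symm

theorem satakeSum_isInvariant (hΦ : Φ ∈ Hecke K σ)
    (hA1' : FinitelyManyLeftCosetsInDoubleCosets K) {w : W} (hw : IsInvariant K N σ w) {g : G}
    (hg : g ∈ Subgroup.normalizer (N : Set G)) : IsInvariant K N σ (satakeSum K N Φ g w) := by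
  intro n hn
  let d : N := ⟨g⁻¹ * n * g, (Subgroup.mem_normalizer_iff''.1 hg n).1 hn.2⟩
  rw [map_satakeSum hΦ hA1']
  calc ∑ᶠ q : N ⧸ (K ⊓ N).subgroupOf N, σ ⟨n, hn.1⟩ (Φ (g * q.out) w)
      = ∑ᶠ q : N ⧸ (K ⊓ N).subgroupOf N, Φ (g * ↑(Equiv.mulLeft d q.out)) w := by
        refine finsum_congr fun q => ?_
        rw [← Module.End.mul_apply, ← hecke_mul_left hΦ]
        simp [d, mul_assoc]
    _ = satakeSum K N Φ g w :=
        finsum_out_comp_equiv (F := fun a : N => Φ (g * a) w)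
          (hecke_apply_mul_coe_mul hΦ hw g) _ fun a b => by
          simp [mul_assoc]

theorem satakeSum_mul_mul (hΦ : Φ ∈ Hecke K σ) (hA1' : FinitelyManyLeftCosetsInDoubleCosets K)
    {w : W} (hw : IsInvariant K N σ w) {k k' : G} (hk : k ∈ K) (hk' : k' ∈ K)
    (hk'N : k' ∈ Subgroup.normalizer (N : Set G)) (g : G) :
    satakeSum K N Φ (k * g * k') w = σ ⟨k, hk⟩ (satakeSum K N Φ g (σ ⟨k', hk'⟩ w)) := by
  let φ : N ≃ N := (MulAut.conj k').toEquiv.subtypeEquiv (Subgroup.mem_normalizer_iff.1 hk'N)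
  have hKN : k' ∈ Subgroup.normalizer ((K ⊓ N : Subgroup G) : Set G) :=
    Subgroup.inf_normalizer_le_normalizer_inf ⟨Subgroup.le_normalizer hk', hk'N⟩
  have hφ (a b : N) : a⁻¹ * b ∈ (K ⊓ N).subgroupOf N ↔ (φ a)⁻¹ * φ b ∈ (K ⊓ N).subgroupOf N := by
    have hcoe : (((φ a)⁻¹ * φ b : N) : G) = k' * ↑(a⁻¹ * b) * k'⁻¹ := by simp [φ, mul_assoc]
    rw [Subgroup.mem_subgroupOf, Subgroup.mem_subgroupOf, hcoe]
    exact Subgroup.mem_normalizer_iff.1 hKN _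
  rw [map_satakeSum hΦ hA1' (σ ⟨k, hk⟩)]
  unfold satakeSum
  calc ∑ᶠ q : N ⧸ (K ⊓ N).subgroupOf N, Φ (k * g * k' * q.out) w
      = ∑ᶠ q : N ⧸ (K ⊓ N).subgroupOf N, σ ⟨k, hk⟩ (Φ (g * φ q.out) (σ ⟨k', hk'⟩ w)) :=
        finsum_congr fun q => by
          rw [show k * g * k' * q.out = k * (g * φ q.out) * k' by simp [φ, mul_assoc],
            hΦ.1 ⟨k, hk⟩ ⟨k', hk'⟩]
          rfl
    _ = ∑ᶠ q : N ⧸ (K ⊓ N).subgroupOf N, σ ⟨k, hk⟩ (Φ (g * q.out) (σ ⟨k', hk'⟩ w)) :=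
        finsum_out_comp_equiv (F := fun a : N => σ ⟨k, hk⟩ (Φ (g * a) (σ ⟨k', hk'⟩ w)))
          (fun a c hc => by rw [hecke_apply_mul_coe_mul hΦ (hw.apply hk' hk'N) g a c hc]) φ hφ

theorem satakeSum_support {P M : Subgroup G} (hΦ : Φ ∈ Hecke K σ) (hMP : M ≤ P) (hNP : N ≤ P)
    (hPN : P ≤ Subgroup.normalizer (N : Set G)) (hMN : M ⊓ N = ⊥)
    (hPprod : ∀ p ∈ P, ∃ m ∈ M, ∃ n' ∈ N, p = m * n')
    (hG : ∀ g : G, ∃ k ∈ K, ∃ p ∈ P, g = k * p)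
    (hKP : ∀ x ∈ K ⊓ P, ∃ m ∈ K ⊓ M, ∃ n' ∈ K ⊓ N, x = m * n')
    (hA1 : FinitelyManyRightCosetsInDoubleCosets K) :
    ∃ S : Finset M, ∀ (m : M) (w : W), satakeSum K N Φ m w ≠ 0 →
      ∃ s ∈ S, ∃ k ∈ K ⊓ M, (m : G) = k * s := by
  obtain ⟨T, hT⟩ := exists_finset_cover_support hΦ hA1
  choose kt hkt mt hmt nt hnt ht using exists_mem_mul_mul hG hPprod
  refine ⟨T.image fun t => ⟨mt t, hmt t⟩, fun m w hmw => ?_⟩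
  obtain ⟨q, hq⟩ : ∃ q : N ⧸ (K ⊓ N).subgroupOf N, Φ (m * q.out) w ≠ 0 := by
    by_contra! h
    exact hmw (finsum_eq_zero_of_forall_eq_zero h)
  obtain ⟨t, htT, k, hk, hmq⟩ := hT (m * q.out) fun h => hq (by simp only [h, LinearMap.zero_apply])
  obtain ⟨a, ha, hma⟩ := exists_mem_inf_mul_of_mul_eq hMP hNP hPN hMN hKP m.2 q.out.2
    (K.mul_mem hk (hkt t)) (hmt t) (hnt t) (by rw [hmq, mul_assoc, ← ht t])
  exact ⟨_, Finset.mem_image_of_mem _ htT, a, ha, hma⟩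

end Hecke

section Duality

variable {V : Type} [AddCommGroup V] [Module C V] [FiniteDimensional C V]
  {K N : Subgroup G} {ρ : Representation C K V} {Φ : G → Module.End C (Module.Dual C V)}

theorem transEnd_apply (u : Module.End C (Module.Dual C V)) (v : V) (l : Module.Dual C V) :
    l (transEnd u v) = u l v := by
  simp [transEnd]

theorem apply_finsum_transEnd_eq_satakeSum (hΦ : Φ ∈ Hecke K ρ.dual)
    (hA1' : FinitelyManyLeftCosetsInDoubleCosets K) {l : Module.Dual C V}
    (hl : IsInvariant K N ρ.dual l) (g : G) (v : V) :
    l (∑ᶠ q : Quotient (QuotientGroup.rightRel ((K ⊓ N).subgroupOf N)),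
        transEnd (Φ (((q.out : N) : G) * g)⁻¹) v) = satakeSum K N Φ g⁻¹ l v := by
  let e := QuotientGroup.quotientRightRelEquivQuotientLeftRel ((K ⊓ N).subgroupOf N)
  have hdecomp (q : Quotient (QuotientGroup.rightRel ((K ⊓ N).subgroupOf N))) :
      ∃ c ∈ K ⊓ N, (((q.out : N) : G) * g)⁻¹ = g⁻¹ * (e q).out * c := by
    obtain ⟨c, hc, h⟩ := exists_out_inv_eq_out_mul q
    refine ⟨c, Subgroup.mem_subgroupOf.1 hc, ?_⟩
    rw [mul_inv_rev, mul_assoc, ← Subgroup.coe_mul, ← h, Subgroup.coe_inv]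
  have hfin : (Function.support fun q : Quotient (QuotientGroup.rightRel ((K ⊓ N).subgroupOf N)) =>
      transEnd (Φ (((q.out : N) : G) * g)⁻¹) v).Finite := by
    refine ((hecke_finite_setOf_mul_out_ne_zero hΦ hA1' g⁻¹).preimage e.injective.injOn).subset
      fun q hq h0 => hq ?_
    obtain ⟨c, hc, h⟩ := hdecomp q
    simp [h, hecke_mul_right hΦ _ ⟨c, hc.1⟩, show Φ (g⁻¹ * (e q).out) = 0 from h0, transEnd,
      LinearMap.dualMap_apply']
  calc l (∑ᶠ q : Quotient (QuotientGroup.rightRel ((K ⊓ N).subgroupOf N)),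
        transEnd (Φ (((q.out : N) : G) * g)⁻¹) v)
      = ∑ᶠ q : Quotient (QuotientGroup.rightRel ((K ⊓ N).subgroupOf N)),
          l (transEnd (Φ (((q.out : N) : G) * g)⁻¹) v) := map_finsum l hfin
    _ = ∑ᶠ q, Module.Dual.eval C V v (Φ (g⁻¹ * (e q).out) l) := finsum_congr fun q => by
        obtain ⟨c, hc, h⟩ := hdecomp q
        rw [transEnd_apply, h, hecke_apply_mul_of_mem hΦ hl _ hc]
        rfl
    _ = ∑ᶠ q : N ⧸ (K ⊓ N).subgroupOf N, Module.Dual.eval C V v (Φ (g⁻¹ * q.out) l) :=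
        finsum_comp_equiv e (f := fun q => Module.Dual.eval C V v (Φ (g⁻¹ * q.out) l))
    _ = Module.Dual.eval C V v (satakeSum K N Φ g⁻¹ l) :=
        (map_satakeSum hΦ hA1' (Module.Dual.eval C V v) g⁻¹ l).symm

end Duality

theorem statement6_general {V : Type} [AddCommGroup V] [Module C V] [FiniteDimensional C V]
    (K P M N : Subgroup G)
    (hMP : M ≤ P) (hNP : N ≤ P)
    (hNnormal : ∀ p ∈ P, ∀ n' ∈ N, p * n' * p⁻¹ ∈ N)
    (hMN : M ⊓ N = ⊥)
    (hPprod : ∀ p ∈ P, ∃ m ∈ M, ∃ n' ∈ N, p = m * n')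
    (hG : ∀ g : G, ∃ k ∈ K, ∃ p ∈ P, g = k * p)
    (hKP : ∀ x ∈ K ⊓ P, ∃ m ∈ K ⊓ M, ∃ n' ∈ K ⊓ N, x = m * n')
    (hA1 : ∀ g : G, ∃ S : Finset G, ∀ x : G,
      (∃ k ∈ K, ∃ k' ∈ K, x = k * g * k') → ∃ s ∈ S, ∃ k ∈ K, x = k * s)
    (hA1' : ∀ g : G, ∃ S : Finset G, ∀ x : G,
      (∃ k ∈ K, ∃ k' ∈ K, x = k * g * k') → ∃ s ∈ S, ∃ k ∈ K, x = s * k)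
    (ρ : Representation C ↥K V) :
    -- `𝒮(Φ)(m)(λ) := Σ_{n(N∩K) ∈ N/(N∩K)} Φ(mn)(λ)`
    let mSat : (G → Module.End C (Module.Dual C V)) → ↥M →
        Module.Dual C V → Module.Dual C V :=
      fun Φ m l => ∑ᶠ q : ↥N ⧸ (K ⊓ N).subgroupOf N,
        Φ ((↑m : G) * ↑(Quotient.out q)) l
    -- (a) the sum has finitely many nonzero terms ...
    (∀ Φ ∈ Hecke K ρ.dual, ∀ m : ↥M, ∀ l ∈ dualInv K N ρ,
      {q : ↥N ⧸ (K ⊓ N).subgroupOf N |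
        Φ ((↑m : G) * ↑(Quotient.out q)) l ≠ 0}.Finite) ∧
    -- ... and is independent of the choice of the coset representatives
    (∀ Φ ∈ Hecke K ρ.dual, ∀ m : ↥M, ∀ l ∈ dualInv K N ρ,
      ∀ rep : ↥N ⧸ (K ⊓ N).subgroupOf N → ↥N,
        (∀ q : ↥N ⧸ (K ⊓ N).subgroupOf N, QuotientGroup.mk (rep q) = q) →
        ∑ᶠ q : ↥N ⧸ (K ⊓ N).subgroupOf N, Φ ((↑m : G) * ↑(rep q)) l = mSat Φ m l) ∧
    -- it maps `(V*)^{N∩K}` into itself ...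
    (∀ Φ ∈ Hecke K ρ.dual, ∀ m : ↥M, ∀ l ∈ dualInv K N ρ,
      mSat Φ m l ∈ dualInv K N ρ) ∧
    -- ... is linear in λ ...
    (∀ Φ ∈ Hecke K ρ.dual, ∀ m : ↥M, ∀ l ∈ dualInv K N ρ, ∀ l' ∈ dualInv K N ρ,
      mSat Φ m (l + l') = mSat Φ m l + mSat Φ m l') ∧
    (∀ Φ ∈ Hecke K ρ.dual, ∀ m : ↥M, ∀ c : C, ∀ l ∈ dualInv K N ρ,
      mSat Φ m (c • l) = c • mSat Φ m l) ∧
    -- ... is K∩M-bi-equivariant ...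
    (∀ Φ ∈ Hecke K ρ.dual, ∀ m : ↥M, ∀ (k k' : G) (hk : k ∈ K ⊓ M) (hk' : k' ∈ K ⊓ M),
      ∀ l ∈ dualInv K N ρ,
      mSat Φ (⟨k, hk.2⟩ * m * ⟨k', hk'.2⟩) l
        = ρ.dual ⟨k, hk.1⟩ (mSat Φ m (ρ.dual ⟨k', hk'.1⟩ l))) ∧
    -- ... and is supported on finitely many double cosets of K∩M, so that 𝒮(Φ) defines
    -- an element of H(M, K∩M, (V*)^{N∩K})
    (∀ Φ ∈ Hecke K ρ.dual, ∃ S : Finset ↥M, ∀ m : ↥M,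
      (∃ l ∈ dualInv K N ρ, mSat Φ m l ≠ 0) →
      ∃ s ∈ S, ∃ k ∈ K ⊓ M, ∃ k' ∈ K ⊓ M, (↑m : G) = k * ↑s * k') ∧
    -- (b) comparison of 𝒮 and 𝒮' : λ(𝒮'(ι(Φ))(m)(v̄)) = (𝒮(Φ)(m⁻¹)(λ))(v)
    (∀ Φ ∈ Hecke K ρ.dual, ∀ m : ↥M, ∀ v : V, ∀ l ∈ dualInv K N ρ,
      l (∑ᶠ q : Quotient (QuotientGroup.rightRel ((K ⊓ N).subgroupOf N)),
          transEnd (Φ (((↑(Quotient.out q) : G) * ↑m)⁻¹)) v)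
        = (mSat Φ m⁻¹ l) v) := by
  intro mSat
  have hPN := le_normalizer_of_conj_mem hNnormal
  have hMnorm : M ≤ Subgroup.normalizer (N : Set G) := hMP.trans hPN
  refine ⟨fun Φ hΦ m l _ => hecke_finite_support_mul_out hΦ hA1' m l,
    fun Φ hΦ m l hl rep hrep => finsum_eq_satakeSum hΦ hl m rep hrep,
    fun Φ hΦ m l hl => satakeSum_isInvariant hΦ hA1' hl (hMnorm m.2),
    fun Φ hΦ m l _ l' _ => satakeSum_add hΦ hA1' m l l',
    fun Φ hΦ m c l _ => satakeSum_smul hΦ hA1' m c l,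
    fun Φ hΦ m k k' hk hk' l hl => satakeSum_mul_mul hΦ hA1' hl hk.1 hk'.1 (hMnorm hk'.2) m,
    fun Φ hΦ => ?_,
    fun Φ hΦ m v l hl => apply_finsum_transEnd_eq_satakeSum hΦ hA1' hl m v⟩
  obtain ⟨S, hS⟩ := satakeSum_support hΦ hMP hNP hPN hMN hPprod hG hKP hA1
  refine ⟨S, fun m ⟨l, _, hl⟩ => ?_⟩
  obtain ⟨s, hs, k, hk, h⟩ := hS m l hl
  exact ⟨s, hs, k, hk, 1, one_mem _, by rw [h, mul_one]⟩

theorem statement6 {V : Type} [AddCommGroup V] [Module C V] [FiniteDimensional C V]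
    (K P M N : Subgroup G)
    (hMP : M ≤ P) (hNP : N ≤ P)
    (hNnormal : ∀ p ∈ P, ∀ n' ∈ N, p * n' * p⁻¹ ∈ N)
    (hMN : M ⊓ N = ⊥)
    (hPprod : ∀ p ∈ P, ∃ m ∈ M, ∃ n' ∈ N, p = m * n')
    (hG : ∀ g : G, ∃ k ∈ K, ∃ p ∈ P, g = k * p)
    (hKP : ∀ x ∈ K ⊓ P, ∃ m ∈ K ⊓ M, ∃ n' ∈ K ⊓ N, x = m * n')
    (hnorm : ∀ (m : ↥(K ⊓ M)) (n' : G), n' ∈ K ⊓ N → ↑m * n' * (↑m)⁻¹ ∈ K ⊓ N)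
    (hA1 : ∀ g : G, ∃ S : Finset G, ∀ x : G,
      (∃ k ∈ K, ∃ k' ∈ K, x = k * g * k') → ∃ s ∈ S, ∃ k ∈ K, x = k * s)
    (hA1' : ∀ g : G, ∃ S : Finset G, ∀ x : G,
      (∃ k ∈ K, ∃ k' ∈ K, x = k * g * k') → ∃ s ∈ S, ∃ k ∈ K, x = s * k)
    (hA1M : ∀ m : ↥M, ∃ S : Finset ↥M, ∀ x : ↥M,
      (∃ k ∈ (K ⊓ M).subgroupOf M, ∃ k' ∈ (K ⊓ M).subgroupOf M, x = k * m * k') →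
      ∃ s ∈ S, ∃ k ∈ (K ⊓ M).subgroupOf M, x = k * s)
    (ρ : Representation C ↥K V) :
    -- `𝒮(Φ)(m)(λ) := Σ_{n(N∩K) ∈ N/(N∩K)} Φ(mn)(λ)`
    let mSat : (G → Module.End C (Module.Dual C V)) → ↥M →
        Module.Dual C V → Module.Dual C V :=
      fun Φ m l => ∑ᶠ q : ↥N ⧸ (K ⊓ N).subgroupOf N,
        Φ ((↑m : G) * ↑(Quotient.out q)) l
    -- (a) the sum has finitely many nonzero terms ...
    (∀ Φ ∈ Hecke K ρ.dual, ∀ m : ↥M, ∀ l ∈ dualInv K N ρ,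
      {q : ↥N ⧸ (K ⊓ N).subgroupOf N |
        Φ ((↑m : G) * ↑(Quotient.out q)) l ≠ 0}.Finite) ∧
    -- ... and is independent of the choice of the coset representatives
    (∀ Φ ∈ Hecke K ρ.dual, ∀ m : ↥M, ∀ l ∈ dualInv K N ρ,
      ∀ rep : ↥N ⧸ (K ⊓ N).subgroupOf N → ↥N,
        (∀ q : ↥N ⧸ (K ⊓ N).subgroupOf N, QuotientGroup.mk (rep q) = q) →
        ∑ᶠ q : ↥N ⧸ (K ⊓ N).subgroupOf N, Φ ((↑m : G) * ↑(rep q)) l = mSat Φ m l) ∧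
    -- it maps `(V*)^{N∩K}` into itself ...
    (∀ Φ ∈ Hecke K ρ.dual, ∀ m : ↥M, ∀ l ∈ dualInv K N ρ,
      mSat Φ m l ∈ dualInv K N ρ) ∧
    -- ... is linear in λ ...
    (∀ Φ ∈ Hecke K ρ.dual, ∀ m : ↥M, ∀ l ∈ dualInv K N ρ, ∀ l' ∈ dualInv K N ρ,
      mSat Φ m (l + l') = mSat Φ m l + mSat Φ m l') ∧
    (∀ Φ ∈ Hecke K ρ.dual, ∀ m : ↥M, ∀ c : C, ∀ l ∈ dualInv K N ρ,
      mSat Φ m (c • l) = c • mSat Φ m l) ∧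
    -- ... is K∩M-bi-equivariant ...
    (∀ Φ ∈ Hecke K ρ.dual, ∀ m : ↥M, ∀ (k k' : G) (hk : k ∈ K ⊓ M) (hk' : k' ∈ K ⊓ M),
      ∀ l ∈ dualInv K N ρ,
      mSat Φ (⟨k, hk.2⟩ * m * ⟨k', hk'.2⟩) l
        = ρ.dual ⟨k, hk.1⟩ (mSat Φ m (ρ.dual ⟨k', hk'.1⟩ l))) ∧
    -- ... and is supported on finitely many double cosets of K∩M, so that 𝒮(Φ) defines
    -- an element of H(M, K∩M, (V*)^{N∩K})
    (∀ Φ ∈ Hecke K ρ.dual, ∃ S : Finset ↥M, ∀ m : ↥M,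
      (∃ l ∈ dualInv K N ρ, mSat Φ m l ≠ 0) →
      ∃ s ∈ S, ∃ k ∈ K ⊓ M, ∃ k' ∈ K ⊓ M, (↑m : G) = k * ↑s * k') ∧
    -- (b) comparison of 𝒮 and 𝒮' : λ(𝒮'(ι(Φ))(m)(v̄)) = (𝒮(Φ)(m⁻¹)(λ))(v)
    (∀ Φ ∈ Hecke K ρ.dual, ∀ m : ↥M, ∀ v : V, ∀ l ∈ dualInv K N ρ,
      l (∑ᶠ q : Quotient (QuotientGroup.rightRel ((K ⊓ N).subgroupOf N)),
          transEnd (Φ (((↑(Quotient.out q) : G) * ↑m)⁻¹)) v)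
        = (mSat Φ m⁻¹ l) v) :=
  statement6_general K P M N hMP hNP hNnormal hMN hPprod hG hKP hA1 hA1' ρ

end Paper
end
end

section
/- If Hom_R(X ⊗_A B, π) ≠ 0 and Hom_R(X, π) is finite-dimensional over C, then B ⊗_A Hom_R(X, π) ≠ 0, where Hom_R(X, π) is viewed as a left A-module via (a·φ)(x) := φ(x·a); that is, the localisation of Hom_R(X, π) at a₀ is nonzero. -/
open MulOpposite

/-!
STATEMENT 8.  `C` a field, `A, B, R` unital `C`-algebras, `f : A → B` an injective
`C`-algebra homomorphism, `b = f a₀` a central invertible element of `B` with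
`B = f(A)[b⁻¹]`.  `X` is an `(R,A)`-bimodule (left `R`-module structure and a right
`A`-action `σ`, commuting with each other), `π` a left `R`-module.

`Hom_R(X, π)` is the space of `R`-linear maps, a left `A`-module via `(a·φ)(x) = φ(x·a)`.
The hypothesis `Hom_R(X ⊗_A B, π) ≠ 0` is encoded through the canonical identification of
`R`-linear maps `X ⊗_A B → π` with additive maps `Φ : B → Hom_R(X,π)` satisfying
`Φ(f(a)·b') = a · Φ(b')`: we assume some such `Φ` is nonzero.  The conclusion
`B ⊗_A Hom_R(X,π) ≠ 0` is encoded through the universal property of the balanced tensor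
product `B ⊗_A Hom_R(X,π)` (`IsTensorOfLoc`): every realization of it is nonzero.
-/

/-- `(T, θ)` realizes the balanced tensor product `B ⊗_A H`, where `B` is a right
`A`-module via `f` and `H` is a left `A`-module via `act`. -/
def IsTensorOfLoc {A B : Type} [Ring A] [Ring B] (f : A →+* B)
    {H : Type} [AddCommGroup H] (act : A → H → H)
    (T : Type) [AddCommGroup T] (θ : B → H → T) : Prop :=
  (∀ (b b' : B) (h : H), θ (b + b') h = θ b h + θ b' h) ∧
  (∀ (b : B) (h h' : H), θ b (h + h') = θ b h + θ b h') ∧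
  (∀ (b : B) (a : A) (h : H), θ (b * f a) h = θ b (act a h)) ∧
  (∀ (Y : Type) [AddCommGroup Y] (g : B → H → Y),
    (∀ (b b' : B) (h : H), g (b + b') h = g b h + g b' h) →
    (∀ (b : B) (h h' : H), g b (h + h') = g b h + g b h') →
    (∀ (b : B) (a : A) (h : H), g (b * f a) h = g b (act a h)) →
    ∃! u : T →+ Y, ∀ (b : B) (h : H), u (θ b h) = g b h)

set_option maxHeartbeats 2000000 in
theorem statement8 {C : Type} [Field C]
    {A B R : Type} [Ring A] [Ring B] [Ring R] [Algebra C A] [Algebra C B] [Algebra C R]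
    (f : A →ₐ[C] B) (hinj : Function.Injective f)
    (β : Bˣ) (hcentral : ∀ x : B, ↑β * x = x * ↑β)
    (a₀ : A) (ha₀ : f a₀ = ↑β)
    (hgen : ∀ x : B, ∃ (a : A) (n : ℕ), x = f a * (↑β⁻¹ : B) ^ n)
    {X : Type} [AddCommGroup X] [Module R X]
    (σ : Aᵐᵒᵖ →+* AddMonoid.End X)
    (hbimod : ∀ (a : A) (r : R) (x : X), σ (op a) (r • x) = r • σ (op a) x)
    {π : Type} [AddCommGroup π] [Module R π] :
    -- the left `A`-action on `Hom_R(X, π)`, `(a·φ)(x) = φ(x·a)`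
    let act : A → (X →ₗ[R] π) → (X →ₗ[R] π) := fun a φ =>
      { toFun := fun x => φ (σ (op a) x)
        map_add' := by intro x y; simp only [map_add]
        map_smul' := by intro r x; simp only [RingHom.id_apply, hbimod a r x, map_smul] }
    -- hypothesis: Hom_R(X ⊗_A B, π) ≠ 0
    (∃ Φ : B →+ (X →ₗ[R] π),
      (∀ (a : A) (b : B), Φ (f a * b) = act a (Φ b)) ∧ Φ ≠ 0) →
    -- hypothesis: Hom_R(X, π) is finite-dimensional over C
    (∃ (k : ℕ) (ψs : Fin k → (X →ₗ[R] π)), ∀ φ : X →ₗ[R] π, ∃ c : Fin k → C,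
      ∀ x : X, φ x = ∑ i, algebraMap C R (c i) • ψs i x) →
    -- conclusion: B ⊗_A Hom_R(X, π) ≠ 0
    ∀ (T : Type) [AddCommGroup T] (θ : B → (X →ₗ[R] π) → T),
      IsTensorOfLoc (f : A →+* B) act T θ → ∃ t : T, t ≠ 0 := by
  intro act hΦ hfd T _ θ hT
  classical
  -- C-module structure on π and H
  letI : Module C π := Module.compHom π (algebraMap C R)
  haveI : SMulCommClass R C π := ⟨fun r c x => by
    show r • ((algebraMap C R c) • x) = (algebraMap C R c) • (r • x)
    rw [smul_smul, smul_smul, Algebra.commutes]⟩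
  have hact : ∀ (a : A) (φ : X →ₗ[R] π) (x : X), (act a φ) x = φ (σ (op a) x) := fun a φ x => rfl
  -- `M : A →+* End_C H`
  have hMsmul : ∀ (a : A) (c : C) (φ : X →ₗ[R] π), act a (c • φ) = c • act a φ := by
    intro a c φ; ext x; rw [hact, LinearMap.smul_apply, LinearMap.smul_apply, hact]
  let M : A →+* Module.End C (X →ₗ[R] π) :=
    { toFun := fun a =>
        { toFun := act a
          map_add' := fun φ ψ => by ext x; simp only [hact, LinearMap.add_apply]
          map_smul' := fun c φ => by simpa using hMsmul a c φ }
      map_one' := by ext φ x; simp [hact]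
      map_mul' := fun a a' => by
        ext φ x
        simp only [LinearMap.coe_mk, AddHom.coe_mk, Module.End.mul_apply]
        rw [hact, hact, hact, op_mul, map_mul]
        rfl
      map_zero' := by ext φ x; simp [hact]
      map_add' := fun a a' => by
        ext φ x
        simp only [LinearMap.coe_mk, AddHom.coe_mk, LinearMap.add_apply]
        rw [hact, hact, hact, op_add, map_add]
        exact map_add φ _ _ }
  -- finite dimensionality
  haveI : Module.Finite C (X →ₗ[R] π) := by
    obtain ⟨k, ψs, hspan⟩ := hfd
    refine ⟨⟨(Set.finite_range ψs).toFinset, ?_⟩⟩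
    rw [Set.Finite.coe_toFinset, eq_top_iff]
    intro φ _
    obtain ⟨c, hc⟩ := hspan φ
    have : φ = ∑ i, c i • ψs i := by
      ext x
      rw [LinearMap.sum_apply]
      exact hc x
    rw [this]
    exact Submodule.sum_mem _ fun i _ =>
      Submodule.smul_mem _ _ (Submodule.subset_span (Set.mem_range_self i))
  -- centrality of a₀
  have ha₀c : ∀ a : A, a * a₀ = a₀ * a := by
    intro a
    apply hinj
    rw [map_mul, map_mul, ha₀, hcentral (f a)]
  set L : Module.End C (X →ₗ[R] π) := M a₀ with hL
  have hcommL : ∀ a : A, Commute L (M a) := by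
    intro a
    rw [hL, Commute, SemiconjBy, ← map_mul, ← map_mul, ha₀c]
  -- stabilization of ranges of powers of L
  have hle : ∀ n : ℕ, LinearMap.range (L ^ (n+1)) ≤ LinearMap.range (L ^ n) := by
    intro n y hy
    obtain ⟨x, hx⟩ := hy
    exact ⟨L x, by rw [← Module.End.mul_apply, ← pow_succ, hx]⟩
  obtain ⟨m, hm⟩ : ∃ m, LinearMap.range (L ^ (m+1)) = LinearMap.range (L ^ m) := by
    by_contra hcon
    push_neg at hcon
    have hstrict : ∀ n : ℕ, Module.finrank C (LinearMap.range (L ^ (n+1))) <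
        Module.finrank C (LinearMap.range (L ^ n)) := by
      intro n
      exact Submodule.finrank_lt_finrank_of_lt (lt_of_le_of_ne (hle n) (hcon n))
    have hbound : ∀ n : ℕ, Module.finrank C (LinearMap.range (L ^ n)) + n ≤
        Module.finrank C (LinearMap.range (L ^ 0)) := by
      intro n
      induction n with
      | zero => simp
      | succ k ih =>
        have h1 := hstrict k
        omega
    have := hbound (Module.finrank C (LinearMap.range (L ^ 0)) + 1)
    omega
  set V : Submodule C (X →ₗ[R] π) := LinearMap.range (L ^ m) with hVdef
  -- M a preserves V
  have hMV : ∀ (a : A) (v : X →ₗ[R] π), v ∈ V → M a v ∈ V := by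
    intro a v hv
    obtain ⟨y, hy⟩ := hv
    refine ⟨M a y, ?_⟩
    rw [← Module.End.mul_apply, ((hcommL a).pow_left m).eq, Module.End.mul_apply, hy]
  have hLV : ∀ v : X →ₗ[R] π, v ∈ V → L v ∈ V := hMV a₀
  -- the restriction of L to V is bijective
  let L' : V →ₗ[C] V := L.restrict hLV
  have hL'surj : Function.Surjective L' := by
    rintro ⟨v, hv⟩
    rw [← hm] at hv
    obtain ⟨y, hy⟩ := hv
    refine ⟨⟨(L ^ m) y, ⟨y, rfl⟩⟩, ?_⟩
    apply Subtype.ext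
    show L ((L ^ m) y) = v
    rw [← Module.End.mul_apply, ← pow_succ', hy]
  have hL'bij : Function.Bijective L' :=
    ⟨LinearMap.injective_iff_surjective.mpr hL'surj, hL'surj⟩
  let e : V ≃ₗ[C] V := LinearEquiv.ofBijective L' hL'bij
  -- the unit of `End C V` given by `L'`
  let u : (Module.End C V)ˣ :=
    { val := L'
      inv := e.symm.toLinearMap
      val_inv := LinearMap.ext fun v => by
        rw [Module.End.mul_apply, Module.End.one_apply]; exact e.apply_symm_apply v
      inv_val := LinearMap.ext fun v => by
        rw [Module.End.mul_apply, Module.End.one_apply]; exact e.symm_apply_apply v }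
  -- restrictions of M a to V
  let M' : A → Module.End C V := fun a => (M a).restrict (hMV a)
  have hM'apply : ∀ (a : A) (v : V), (M' a v : X →ₗ[R] π) = M a (v : X →ₗ[R] π) :=
    fun a v => rfl
  have hM'mul : ∀ a a' : A, M' (a * a') = M' a * M' a' := by
    intro a a'
    refine LinearMap.ext fun v => ?_
    rw [Module.End.mul_apply]
    refine Subtype.ext ?_
    show (M (a * a')) (v : X →ₗ[R] π) = M a ((M a') (v : X →ₗ[R] π))
    rw [map_mul, Module.End.mul_apply]
  have hM'add : ∀ a a' : A, M' (a + a') = M' a + M' a' := by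
    intro a a'
    refine LinearMap.ext fun v => ?_
    rw [LinearMap.add_apply]
    refine Subtype.ext ?_
    show (M (a + a')) (v : X →ₗ[R] π) = (M a) (v : X →ₗ[R] π) + (M a') (v : X →ₗ[R] π)
    rw [map_add, LinearMap.add_apply]
  have hM'one : M' 1 = 1 := by
    refine LinearMap.ext fun v => ?_
    rw [Module.End.one_apply]
    refine Subtype.ext ?_
    show (M 1) (v : X →ₗ[R] π) = (v : X →ₗ[R] π)
    rw [map_one, Module.End.one_apply]
  have huval : (u : Module.End C V) = M' a₀ := by
    ext v; rfl
  have hcommV : ∀ a : A, Commute (u : Module.End C V) (M' a) := by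
    intro a
    rw [huval, Commute, SemiconjBy, ← hM'mul, ← hM'mul, ha₀c]
  have hcommVinv : ∀ (a : A) (k : ℕ), Commute ((u⁻¹ ^ k : (Module.End C V)ˣ) : Module.End C V) (M' a) := by
    intro a k
    rw [Units.val_pow_eq_pow_val]
    exact (((hcommV a).units_inv_left)).pow_left k
  -- the key computation
  have key : ∀ (a : A) (n k : ℕ),
      ((u⁻¹ ^ (n + k) : (Module.End C V)ˣ) : Module.End C V) * M' (a * a₀ ^ k)
        = ((u⁻¹ ^ n : (Module.End C V)ˣ) : Module.End C V) * M' a := by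
    intro a n k
    have h1 : M' (a * a₀ ^ k) = M' a * (u : Module.End C V) ^ k := by
      rw [huval]
      rw [hM'mul]
      congr 1
      induction k with
      | zero => simpa using hM'one
      | succ j ih => rw [pow_succ, pow_succ, ← ih, ← hM'mul]
    rw [h1, ← mul_assoc, (hcommVinv a (n + k)).eq, mul_assoc, (hcommVinv a n).eq]
    congr 1
    rw [← Units.val_pow_eq_pow_val, ← Units.val_mul]
    congr 1
    rw [pow_add, mul_assoc, inv_pow u k, inv_mul_cancel, mul_one]
  -- commutation facts in B
  have hβc : ∀ x : B, Commute (↑β : B) x := fun x => hcentral x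
  have hpowc : ∀ (x : B) (n : ℕ), Commute ((↑β⁻¹ : B) ^ n) x :=
    fun x n => ((hβc x).units_inv_left).pow_left n
  have hβk : ∀ n k : ℕ, (↑β : B) ^ k * (↑β⁻¹ : B) ^ (n + k) = (↑β⁻¹ : B) ^ n := by
    intro n k
    have : ((β ^ k * β⁻¹ ^ (n + k) : Bˣ) : B) = ((β⁻¹ ^ n : Bˣ) : B) := by
      congr 1
      group
    simpa [Units.val_mul, Units.val_pow_eq_pow_val] using this
  have hβk2 : ∀ n k : ℕ, (↑β⁻¹ : B) ^ k * (↑β : B) ^ (n + k) = (↑β : B) ^ n := by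
    intro n k
    have : ((β⁻¹ ^ k * β ^ (n + k) : Bˣ) : B) = ((β ^ n : Bˣ) : B) := by
      congr 1
      group
    simpa [Units.val_mul, Units.val_pow_eq_pow_val] using this
  -- injectivity consequence
  have hfinj : ∀ (a a' : A) (n n' : ℕ),
      f a * (↑β⁻¹ : B) ^ n = f a' * (↑β⁻¹ : B) ^ n' → a * a₀ ^ n' = a' * a₀ ^ n := by
    intro a a' n n' hh
    apply hinj
    rw [map_mul, map_mul, map_pow, map_pow, ha₀]
    have h1 : f a * (↑β : B) ^ n' = f a * (↑β⁻¹ : B) ^ n * (↑β : B) ^ (n' + n) := by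
      rw [mul_assoc, hβk2 n' n]
    have h2 : f a' * (↑β : B) ^ n = f a' * (↑β⁻¹ : B) ^ n' * (↑β : B) ^ (n + n') := by
      rw [mul_assoc, hβk2 n n']
    rw [h1, h2, hh, Nat.add_comm n' n]
  -- representation of elements of B, and the map ρ
  choose repa repn hrep using hgen
  let ρ : B → Module.End C V := fun b =>
    ((u⁻¹ ^ repn b : (Module.End C V)ˣ) : Module.End C V) * M' (repa b)
  have core : ∀ (a : A) (n : ℕ) (b : B), b = f a * (↑β⁻¹ : B) ^ n →
      ρ b = ((u⁻¹ ^ n : (Module.End C V)ˣ) : Module.End C V) * M' a := by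
    intro a n b hb
    have heq : a * a₀ ^ repn b = repa b * a₀ ^ n :=
      hfinj _ _ _ _ (by rw [← hb]; exact hrep b)
    show ((u⁻¹ ^ repn b : (Module.End C V)ˣ) : Module.End C V) * M' (repa b) = _
    rw [← key (repa b) (repn b) n, ← heq, Nat.add_comm (repn b) n, key a n (repn b)]
  -- the map q : H → V
  let Lm : (X →ₗ[R] π) → V := fun h => ⟨(L ^ m) h, ⟨h, rfl⟩⟩
  let q : (X →ₗ[R] π) → V := fun h =>
    ((u⁻¹ ^ m : (Module.End C V)ˣ) : Module.End C V) (Lm h)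
  have hLmadd : ∀ h h', Lm (h + h') = Lm h + Lm h' := by
    intro h h'
    exact Subtype.ext (map_add _ h h')
  have hqadd : ∀ h h', q (h + h') = q h + q h' := by
    intro h h'
    show ((u⁻¹ ^ m : (Module.End C V)ˣ) : Module.End C V) (Lm (h + h')) = _
    rw [hLmadd, map_add]
  have hLmM : ∀ (a : A) (h : X →ₗ[R] π), Lm (M a h) = M' a (Lm h) := by
    intro a h
    refine Subtype.ext ?_
    show (L ^ m) (M a h) = M a ((L ^ m) h)
    rw [← Module.End.mul_apply, ((hcommL a).pow_left m).eq, Module.End.mul_apply]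
  have hqM : ∀ (a : A) (h : X →ₗ[R] π), q (M a h) = M' a (q h) := by
    intro a h
    show ((u⁻¹ ^ m : (Module.End C V)ˣ) : Module.End C V) (Lm (M a h)) = _
    rw [hLmM, ← Module.End.mul_apply, (hcommVinv a m).eq, Module.End.mul_apply]
  -- the bilinear map g
  let g : B → (X →ₗ[R] π) → V := fun b h => ρ b (q h)
  have hg1 : ∀ (b b' : B) (h : X →ₗ[R] π), g (b + b') h = g b h + g b' h := by
    intro b b' h
    have hbb' : b + b' = f (repa b * a₀ ^ repn b' + repa b' * a₀ ^ repn b) *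
        (↑β⁻¹ : B) ^ (repn b + repn b') := by
      rw [map_add, add_mul, map_mul, map_mul, map_pow, map_pow, ha₀]
      rw [mul_assoc, hβk (repn b) (repn b'), mul_assoc, Nat.add_comm (repn b) (repn b'),
        hβk (repn b') (repn b), ← hrep b, ← hrep b']
    have : ρ (b + b') = ρ b + ρ b' := by
      rw [core _ _ _ hbb', hM'add, mul_add,
        key (repa b) (repn b) (repn b'), Nat.add_comm (repn b) (repn b'),
        key (repa b') (repn b') (repn b)]
    show ρ (b + b') (q h) = ρ b (q h) + ρ b' (q h)
    rw [this, LinearMap.add_apply]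
  have hg2 : ∀ (b : B) (h h' : X →ₗ[R] π), g b (h + h') = g b h + g b h' := by
    intro b h h'
    show ρ b (q (h + h')) = ρ b (q h) + ρ b (q h')
    rw [hqadd, map_add]
  have hg3 : ∀ (b : B) (a : A) (h : X →ₗ[R] π), g (b * f a) h = g b (act a h) := by
    intro b a h
    have hbfa : b * f a = f (repa b * a) * (↑β⁻¹ : B) ^ repn b := by
      rw [map_mul, mul_assoc, ← (hpowc (f a) (repn b)).eq, ← mul_assoc, ← hrep b]
    have hMah : act a h = M a h := rfl
    have hρmul : ρ (b * f a) = ρ b * M' a := by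
      rw [core _ _ _ hbfa, hM'mul, ← mul_assoc]
    show ρ (b * f a) (q h) = ρ b (q (act a h))
    rw [hρmul, hMah, hqM, Module.End.mul_apply]
  -- the sequence h_n = Φ(β⁻ⁿ)
  obtain ⟨Φ, hΦprop, hΦne⟩ := hΦ
  have hstep : ∀ n : ℕ, L (Φ ((↑β⁻¹ : B) ^ (n + 1))) = Φ ((↑β⁻¹ : B) ^ n) := by
    intro n
    have : L (Φ ((↑β⁻¹ : B) ^ (n + 1))) = act a₀ (Φ ((↑β⁻¹ : B) ^ (n + 1))) := rfl
    rw [this, ← hΦprop a₀ _, ha₀]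
    rw [show (↑β : B) * (↑β⁻¹ : B) ^ (n + 1) = (↑β⁻¹ : B) ^ n from by
      have := hβk n 1
      rwa [pow_one] at this]
  obtain ⟨N, hN⟩ : ∃ N : ℕ, Φ ((↑β⁻¹ : B) ^ N) ≠ 0 := by
    by_contra hcon
    push_neg at hcon
    apply hΦne
    refine AddMonoidHom.ext fun b => ?_
    rw [hrep b, hΦprop, hcon (repn b)]
    show act (repa b) 0 = (0 : B →+ (X →ₗ[R] π)) b
    rw [AddMonoidHom.zero_apply]
    exact map_zero (M (repa b))
  have hpowstep : ∀ j : ℕ, (L ^ j) (Φ ((↑β⁻¹ : B) ^ (N + j))) = Φ ((↑β⁻¹ : B) ^ N) := by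
    intro j
    induction j with
    | zero => simp
    | succ k ih =>
      have h' := hstep (N + k)
      rw [Nat.add_assoc] at h'
      rw [pow_succ, Module.End.mul_apply, h']
      exact ih
  -- conclusion
  obtain ⟨-, -, -, huniv⟩ := hT
  obtain ⟨w, hw, -⟩ := huniv V g hg1 hg2 hg3
  refine ⟨θ 1 (Φ ((↑β⁻¹ : B) ^ (N + m))), ?_⟩
  intro h0
  have hzero : g 1 (Φ ((↑β⁻¹ : B) ^ (N + m))) = 0 := by
    rw [← hw 1 _, h0, map_zero]
  apply hN
  -- compute g 1 (...)
  have hρ1 : ρ 1 = 1 := by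
    rw [core 1 0 1 (by rw [map_one, pow_zero, mul_one]), pow_zero, hM'one, mul_one]
    rfl
  have hLm : Lm (Φ ((↑β⁻¹ : B) ^ (N + m))) = ⟨Φ ((↑β⁻¹ : B) ^ N), by
      rw [← hpowstep m]; exact ⟨_, rfl⟩⟩ :=
    Subtype.ext (hpowstep m)
  have hgval : g 1 (Φ ((↑β⁻¹ : B) ^ (N + m)))
      = ((u⁻¹ ^ m : (Module.End C V)ˣ) : Module.End C V)
        ⟨Φ ((↑β⁻¹ : B) ^ N), by rw [← hpowstep m]; exact ⟨_, rfl⟩⟩ := by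
    show ρ 1 (q (Φ ((↑β⁻¹ : B) ^ (N + m)))) = _
    rw [hρ1, Module.End.one_apply]
    show ((u⁻¹ ^ m : (Module.End C V)ˣ) : Module.End C V) (Lm _) = _
    rw [hLm]
  rw [hgval] at hzero
  have : (⟨Φ ((↑β⁻¹ : B) ^ N), by rw [← hpowstep m]; exact ⟨_, rfl⟩⟩ : V) = 0 := by
    have happ := congrArg ((u ^ m : (Module.End C V)ˣ) : Module.End C V) hzero
    rw [map_zero, ← Module.End.mul_apply, ← Units.val_mul] at happ
    have hone : (u ^ m) * (u⁻¹ ^ m) = 1 := by group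
    rw [hone, Units.val_one, Module.End.one_apply] at happ
    exact happ
  have := congrArg (Subtype.val) this
  simpa using this
end

section
/- Let H be a nonzero right A-module that is finite-dimensional over C. The following are equivalent: (i) H ⊗_A B = 0; (ii) for every simple A-submodule N of H, N ⊗_A B = 0; (iii) for every C-algebra homomorphism χ : Z(A) → C for which there exists a nonzero h ∈ H with h·z = χ(z)·h for all z ∈ Z(A), one has χ(a₀) = 0 (equivalently, the localisation at a₀ of the one-dimensional Z(A)-module given by χ is zero). -/
/-!
All three conditions are equivalent to `a₀` acting locally nilpotently on `H`. If it does, every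
localisation at `a₀` of `H` or of a submodule vanishes, and every central character occurring in
`H` kills `a₀`. If it does not, let `E` be the action of `a₀` and `d = dim H`: the Fitting
component `W = im E^d` is a nonzero submodule on which `E` is invertible. Since `B` is the
universal extension of `A` inverting `a₀`, any quotient of a module by `a₀`-torsion on which `a₀`
acts invertibly is its localisation; so `E^d : H → W` realises `H ⊗_A B ≅ W ≠ 0`. A simple
submodule `V ⊆ W` has, by Schur's lemma over the algebraically closed `C`, a central character `χ`
with `χ(a₀) ≠ 0`, so that `V ⊗_A B ≅ V ≠ 0` as well.
-/

open MulOpposite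

/-- `(L, τ, ι)` realizes the localisation `M ⊗_A B` of the right `A`-module `(M, σ)`. -/
def IsLocAt {A B : Type} [Ring A] [Ring B] (f : A →+* B)
    {M : Type} [AddCommGroup M] (σ : Aᵐᵒᵖ →+* AddMonoid.End M)
    {L : Type} [AddCommGroup L] (τ : Bᵐᵒᵖ →+* AddMonoid.End L) (ι : M →+ L) : Prop :=
  (∀ (a : A) (m : M), ι (σ (op a) m) = τ (op (f a)) (ι m)) ∧
  (∀ (X : Type) [AddCommGroup X] (ξ : Bᵐᵒᵖ →+* AddMonoid.End X) (g : M →+ X),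
    (∀ (a : A) (m : M), g (σ (op a) m) = ξ (op (f a)) (g m)) →
    ∃! h : L →+ X, (∀ (b : B) (l : L), h (τ (op b) l) = ξ (op b) (h l)) ∧ h.comp ι = g)

open Function Module

lemma AddMonoid.End.injective_of_isUnit {M : Type} [AddCommMonoid M] {e : AddMonoid.End M}
    (he : IsUnit e) : Injective e := by
  obtain ⟨u, rfl⟩ := he
  exact LeftInverse.injective (g := ⇑(↑u⁻¹ : AddMonoid.End M)) fun x =>
    DFunLike.congr_fun u.inv_mul x

lemma LinearMap.isUnit_toAddMonoidHom {R M : Type} [Semiring R] [AddCommMonoid M] [Module R M]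
    {e : Module.End R M} (he : IsUnit e) : IsUnit (M := AddMonoid.End M) e.toAddMonoidHom :=
  he.map (F := Module.End R M →* AddMonoid.End M)
    { toFun e := e.toAddMonoidHom
      map_one' := rfl
      map_mul' _ _ := rfl }

lemma Module.End.eq_zero_of_mem_range_pow_finrank {K V : Type} [DivisionRing K] [AddCommGroup V]
    [Module K V] [FiniteDimensional K V] (e : Module.End K V) {x : V}
    (hx : x ∈ LinearMap.range (e ^ finrank K V)) (hex : e x = 0) : x = 0 := by
  obtain ⟨y, rfl⟩ := hx
  have hy : y ∈ LinearMap.ker (e ^ (finrank K V + 1)) := by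
    rw [LinearMap.mem_ker, pow_succ', Module.End.mul_apply, hex]
  rwa [Module.End.ker_pow_eq_ker_pow_finrank_of_le (Nat.le_succ _)] at hy

section Action

variable {A M : Type} [Ring A] [AddCommGroup M] (σ : Aᵐᵒᵖ →+* AddMonoid.End M)

def IsStable (N : AddSubgroup M) : Prop :=
  ∀ (a : A) (x : M), x ∈ N → σ (op a) x ∈ N

def IsSimpleStable (N : AddSubgroup M) : Prop :=
  IsStable σ N ∧ N ≠ ⊥ ∧ ∀ N' : AddSubgroup M, IsStable σ N' → N' ≤ N → N' = ⊥ ∨ N' = N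

def IsPowerTorsion (a₀ : A) : Prop :=
  ∀ m : M, ∃ n : ℕ, σ (op (a₀ ^ n)) m = 0

def restrictAction (N : AddSubgroup M) (hN : IsStable σ N) : Aᵐᵒᵖ →+* AddMonoid.End N where
  toFun p :=
    { toFun x := ⟨σ p x, by simpa using hN (unop p) x x.2⟩
      map_zero' := by simp
      map_add' x y := Subtype.ext (map_add _ _ _) }
  map_one' := AddMonoidHom.ext fun x => Subtype.ext <| by
    show σ 1 x = x
    rw [map_one]; rfl
  map_mul' p q := AddMonoidHom.ext fun x => Subtype.ext <| by
    show σ (p * q) x = σ p (σ q x)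
    rw [map_mul]; rfl
  map_zero' := AddMonoidHom.ext fun x => Subtype.ext <| by
    show σ 0 x = 0
    rw [map_zero]; rfl
  map_add' p q := AddMonoidHom.ext fun x => Subtype.ext <| by
    show σ (p + q) x = σ p x + σ q x
    rw [map_add]; rfl

lemma action_mul_apply (a b : A) (x : M) : σ (op (a * b)) x = σ (op b) (σ (op a) x) := by
  rw [op_mul, map_mul]
  rfl

lemma action_add_apply (a b : A) (x : M) : σ (op (a + b)) x = σ (op a) x + σ (op b) x := by
  rw [op_add, map_add]
  rfl

lemma action_comm {a b : A} (hab : Commute a b) (x : M) :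
    σ (op a) (σ (op b) x) = σ (op b) (σ (op a) x) := by
  rw [← action_mul_apply, ← action_mul_apply, hab.eq]

end Action

lemma Commute.mul_units_inv_eq_iff {R : Type} [Ring R] {v w : Rˣ} (hvw : Commute (v : R) w)
    {x y : R} : x * ↑v⁻¹ = y * ↑w⁻¹ ↔ x * w = y * v := by
  rw [Units.mul_inv_eq_iff_eq_mul, mul_assoc, hvw.symm.units_inv_left.eq, ← mul_assoc,
    Units.eq_mul_inv_iff_mul_eq]

lemma Commute.mul_units_inv_add {R : Type} [Ring R] {v w : Rˣ} (hvw : Commute (v : R) w)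
    (x y : R) : x * ↑v⁻¹ + y * ↑w⁻¹ = (x * w + y * v) * ↑(v * w)⁻¹ := by
  rw [add_mul, mul_inv_rev, Units.val_mul, ← mul_assoc, Units.mul_inv_cancel_right,
    ← hvw.units_inv_left.units_inv_right.eq, ← mul_assoc, Units.mul_inv_cancel_right]

lemma Commute.mul_units_inv_mul {R : Type} [Ring R] {v : Rˣ} {y : R} (hvy : Commute (↑v⁻¹ : R) y)
    (x : R) (w : Rˣ) : x * ↑v⁻¹ * (y * ↑w⁻¹) = x * y * ↑(w * v)⁻¹ := by
  rw [mul_inv_rev, Units.val_mul, mul_assoc x, ← mul_assoc _ y, hvy.eq]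
  simp only [mul_assoc]

section Localisation

variable {A B : Type} [Ring A] [Ring B] {f : A →+* B} {a₀ : A}

theorem exists_ringHom_comp_eq {T : Type} [Ring T] (hf : Injective f)
    (hcomm : ∀ x, Commute (f a₀) x) (hgen : ∀ x, ∃ (a : A) (n : ℕ), x * f a₀ ^ n = f a)
    (g : A →+* T) (hg : IsUnit (g a₀)) : ∃ φ : B →+* T, φ.comp f = g := by
  have ha₀ : ∀ a, Commute a₀ a := fun a => (hcomm (f a)).of_map hf
  obtain ⟨u, hu⟩ := hg
  have hpow : ∀ n, g (a₀ ^ n) = ↑(u ^ n) := fun n => by rw [map_pow, ← hu, Units.val_pow_eq_pow_val]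
  have hu_comm : ∀ n a, Commute (↑(u ^ n)⁻¹ : T) (g a) := fun n a => by
    have h := ((ha₀ a).pow_left n).map g
    rw [hpow] at h
    exact h.units_inv_left
  choose num den hrep using hgen
  -- `x ↦ g (num x) * u⁻ⁿ` does not depend on the chosen fraction `x = f (num x) * f a₀⁻ⁿ`
  have hspec : ∀ x a n, x * f a₀ ^ n = f a → g (num x) * ↑(u ^ den x)⁻¹ = g a * ↑(u ^ n)⁻¹ := by
    intro x a n hx
    rw [((Commute.refl u).pow_pow _ _).units_val.mul_units_inv_eq_iff, ← hpow, ← hpow,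
      ← map_mul, ← map_mul]
    congr 1
    apply hf
    rw [map_mul, map_mul, map_pow, map_pow, ← hrep, ← hx, mul_assoc, mul_assoc, ← pow_add,
      ← pow_add, add_comm]
  refine ⟨{ toFun x := g (num x) * ↑(u ^ den x)⁻¹
            map_one' := by simpa using hspec 1 1 0 (by simp)
            map_mul' x y := ?_
            map_zero' := by simpa using hspec 0 0 0 (by simp)
            map_add' x y := ?_ }, ?_⟩
  · have hxy : x * y * f a₀ ^ (den y + den x) = f (num x * num y) := by
      rw [pow_add, ← mul_assoc, mul_assoc x, hrep, mul_assoc, ← (hcomm _).pow_left _ |>.eq,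
        ← mul_assoc, hrep, map_mul]
    rw [hspec _ _ _ hxy, (hu_comm _ _).mul_units_inv_mul, map_mul, ← pow_add]
  · have hxy : (x + y) * f a₀ ^ (den x + den y) = f (num x * a₀ ^ den y + num y * a₀ ^ den x) := by
      rw [add_mul, pow_add, ← mul_assoc, hrep, ← pow_add, add_comm (den x), pow_add,
        ← mul_assoc y, hrep, map_add, map_mul, map_mul, map_pow, map_pow]
    rw [hspec _ _ _ hxy, ((Commute.refl u).pow_pow _ _).units_val.mul_units_inv_add, map_add,
      map_mul, map_mul, hpow, hpow, ← pow_add]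
  · ext a
    simpa using hspec (f a) a 0 (by simp)

theorem IsLocAt.subsingleton_of_forall_eq_zero {M L : Type} [AddCommGroup M] [AddCommGroup L]
    {σ : Aᵐᵒᵖ →+* AddMonoid.End M} {τ : Bᵐᵒᵖ →+* AddMonoid.End L} {ι : M →+ L}
    (hloc : IsLocAt f σ τ ι) (hι : ∀ m, ι m = 0) : Subsingleton L := by
  obtain ⟨_, _, huniq⟩ := hloc.2 L τ ι hloc.1
  have hid : AddMonoidHom.id L = 0 :=
    (huniq _ ⟨fun _ _ => rfl, rfl⟩).trans (huniq 0 ⟨by simp, by ext m; simp [hι m]⟩).symm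
  exact ⟨fun x y => (DFunLike.congr_fun hid x).trans (DFunLike.congr_fun hid y).symm⟩

theorem IsLocAt.subsingleton_of_isPowerTorsion {M L : Type} [AddCommGroup M] [AddCommGroup L]
    {σ : Aᵐᵒᵖ →+* AddMonoid.End M} {τ : Bᵐᵒᵖ →+* AddMonoid.End L} {ι : M →+ L}
    (hloc : IsLocAt f σ τ ι) (hunit : IsUnit (f a₀)) (htor : IsPowerTorsion σ a₀) :
    Subsingleton L :=
  hloc.subsingleton_of_forall_eq_zero fun m => by
    obtain ⟨n, hn⟩ := htor m
    apply AddMonoid.End.injective_of_isUnit ((hunit.pow n).op.map τ)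
    rw [map_zero, ← map_pow, ← hloc.1, hn, map_zero]

theorem isLocAt_of_surjective (hf : Injective f) (hcomm : ∀ x, Commute (f a₀) x)
    (hunit : IsUnit (f a₀)) (hgen : ∀ x, ∃ (a : A) (n : ℕ), x * f a₀ ^ n = f a)
    {M M' : Type} [AddCommGroup M] [AddCommGroup M'] (σ : Aᵐᵒᵖ →+* AddMonoid.End M)
    (σ' : Aᵐᵒᵖ →+* AddMonoid.End M') (π : M →+ M') (hπ : Surjective π)
    (hπσ : ∀ a m, π (σ (op a) m) = σ' (op a) (π m))
    (hker : ∀ m, π m = 0 → ∃ n : ℕ, σ (op (a₀ ^ n)) m = 0) (hσ' : IsUnit (σ' (op a₀))) :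
    ∃ τ : Bᵐᵒᵖ →+* AddMonoid.End M', IsLocAt f σ τ π := by
  have hgen_op : ∀ x : Bᵐᵒᵖ, ∃ (a : Aᵐᵒᵖ) (n : ℕ),
      x * RingHom.op f (op a₀) ^ n = RingHom.op f a := by
    intro x
    obtain ⟨a, n, hx⟩ := hgen (unop x)
    refine ⟨op a, n, unop_injective ?_⟩
    simpa [((hcomm (unop x)).pow_left n).eq] using hx
  obtain ⟨τ, hτ⟩ := exists_ringHom_comp_eq (f := RingHom.op f) (a₀ := op a₀)
    (fun x y h => unop_injective (hf (op_injective h))) (fun x => (hcomm (unop x)).op) hgen_op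
    σ' hσ'
  have hτf : ∀ a, τ (op (f a)) = σ' (op a) := fun a => RingHom.congr_fun hτ (op a)
  refine ⟨τ, fun a m => by rw [hτf, hπσ], fun X _ ξ g hg => ?_⟩
  have hξ : ∀ n, Injective (ξ (op (f a₀ ^ n))) := fun n =>
    AddMonoid.End.injective_of_isUnit ((hunit.pow n).op.map ξ)
  have hgπ : π.ker ≤ g.ker := fun m hm => by
    obtain ⟨n, hn⟩ := hker m hm
    apply hξ n
    rw [map_zero, ← map_pow, ← hg, hn, map_zero]
  set h := π.liftOfSurjective hπ ⟨g, hgπ⟩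
  have hh : h.comp π = g := π.liftOfRightInverse_comp _ _ _
  have hhf : ∀ a l, h (τ (op (f a)) l) = ξ (op (f a)) (h l) := fun a l => by
    obtain ⟨m, rfl⟩ := hπ l
    rw [hτf, ← hπσ, ← AddMonoidHom.comp_apply, ← AddMonoidHom.comp_apply, hh, hg]
  refine ⟨h, ⟨fun b l => ?_, hh⟩, fun h' hh' =>
    (AddMonoidHom.cancel_right hπ).mp (hh'.2.trans hh.symm)⟩
  obtain ⟨a, n, hb⟩ := hgen b
  apply hξ n
  calc ξ (op (f a₀ ^ n)) (h (τ (op b) l)) = h (τ (op (b * f a₀ ^ n)) l) := by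
        rw [action_mul_apply, ← map_pow, hhf]
    _ = ξ (op (b * f a₀ ^ n)) (h l) := by rw [hb, hhf]
    _ = ξ (op (f a₀ ^ n)) (ξ (op b) (h l)) := action_mul_apply ξ _ _ _

end Localisation

section Linear

variable {C A H : Type} [Field C] [Ring A] [Algebra C A] [AddCommGroup H] [Module C H]
  {σ : Aᵐᵒᵖ →+* AddMonoid.End H}

variable (C) in
def IsScalarCompatible (σ : Aᵐᵒᵖ →+* AddMonoid.End H) : Prop :=
  ∀ (c : C) (x : H), σ (op (algebraMap C A c)) x = c • x

lemma action_smul (hC : IsScalarCompatible C σ) (a : A) (c : C)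
    (x : H) : σ (op a) (c • x) = c • σ (op a) x := by
  rw [← hC, ← hC, action_comm σ (Algebra.commute_algebraMap_left c a).symm]

def actLinear (hC : IsScalarCompatible C σ) (a : A) :
    Module.End C H where
  toFun := σ (op a)
  map_add' := map_add _
  map_smul' := action_smul hC a

@[simp]
lemma actLinear_apply (hC : IsScalarCompatible C σ) (a : A)
    (x : H) : actLinear hC a x = σ (op a) x :=
  rfl

lemma actLinear_pow_apply (hC : IsScalarCompatible C σ) (a : A)
    (n : ℕ) (x : H) : (actLinear hC a ^ n) x = σ (op (a ^ n)) x := by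
  rw [op_pow, map_pow, AddMonoid.End.coe_pow, Module.End.pow_apply]
  rfl

def IsStable.toSubmodule (hC : IsScalarCompatible C σ)
    {N : AddSubgroup H} (hN : IsStable σ N) : Submodule C H :=
  { N with smul_mem' := fun c x hx => hC c x ▸ hN (algebraMap C A c) x hx }

@[simp]
lemma IsStable.toAddSubgroup_toSubmodule (hC : IsScalarCompatible C σ)
    {N : AddSubgroup H} (hN : IsStable σ N) : (hN.toSubmodule hC).toAddSubgroup = N :=
  rfl

lemma IsStable.toSubmodule_ne_bot (hC : IsScalarCompatible C σ) {N : AddSubgroup H}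
    (hN : IsStable σ N) (hN0 : N ≠ ⊥) : hN.toSubmodule hC ≠ ⊥ := fun h =>
  hN0 (by rw [← hN.toAddSubgroup_toSubmodule hC, h, Submodule.bot_toAddSubgroup])

theorem isPowerTorsion_iff (hC : IsScalarCompatible C σ)
    [FiniteDimensional C H] {a₀ : A} :
    IsPowerTorsion σ a₀ ↔ actLinear hC a₀ ^ finrank C H = 0 := by
  refine ⟨fun htor => LinearMap.ext fun x => ?_, fun h x => ⟨finrank C H, ?_⟩⟩
  · obtain ⟨n, hn⟩ := htor x
    refine Module.End.ker_pow_le_ker_pow_finrank _ n ?_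
    rw [LinearMap.mem_ker, actLinear_pow_apply, hn]
  · rw [← actLinear_pow_apply hC, h, LinearMap.zero_apply]

theorem exists_isSimpleStable_le (hC : IsScalarCompatible C σ)
    [FiniteDimensional C H] (S : Submodule C H) (hS : IsStable σ S.toAddSubgroup) (hS0 : S ≠ ⊥) :
    ∃ V ≤ S.toAddSubgroup, IsSimpleStable σ V := by
  induction S using WellFoundedLT.induction with
  | _ S ih =>
  by_cases hsimple : IsSimpleStable σ S.toAddSubgroup
  · exact ⟨_, le_rfl, hsimple⟩
  obtain ⟨N, hN, hNS, hN0, hNS'⟩ : ∃ N, IsStable σ N ∧ N ≤ S.toAddSubgroup ∧ N ≠ ⊥ ∧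
      N ≠ S.toAddSubgroup := by
    have hS0' : S.toAddSubgroup ≠ ⊥ := by rwa [← Submodule.bot_toAddSubgroup (R := C), Ne,
      Submodule.toAddSubgroup_inj]
    simpa [IsSimpleStable, hS, hS0'] using hsimple
  have hlt : hN.toSubmodule hC < S :=
    lt_of_le_of_ne hNS fun h => hNS' (by rw [← h]; rfl)
  obtain ⟨V, hVN, hV⟩ := ih _ hlt hN (hN.toSubmodule_ne_bot hC hN0)
  exact ⟨V, hVN.trans hNS, hV⟩

end Linear

section Schur

variable {C A H : Type} [Field C] [IsAlgClosed C] [Ring A] [Algebra C A] [AddCommGroup H]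
  [Module C H] [FiniteDimensional C H] {σ : Aᵐᵒᵖ →+* AddMonoid.End H}

theorem IsSimpleStable.exists_smul_eq (hC : IsScalarCompatible C σ)
    {V : AddSubgroup H} (hV : IsSimpleStable σ V) {z : A} (hz : ∀ a, Commute z a) :
    ∃ c : C, ∀ x ∈ V, σ (op z) x = c • x := by
  obtain ⟨hVs, hV0, hVmin⟩ := hV
  have : Nontrivial (hVs.toSubmodule hC) :=
    Submodule.nontrivial_iff_ne_bot.mpr (hVs.toSubmodule_ne_bot hC hV0)
  have hzV : ∀ x ∈ hVs.toSubmodule hC, actLinear hC z x ∈ hVs.toSubmodule hC := hVs z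
  obtain ⟨c, hc⟩ := Module.End.exists_eigenvalue ((actLinear hC z).restrict hzV)
  obtain ⟨v, hv⟩ := hc.exists_hasEigenvector
  -- the `c`-eigenvectors of `z` in `V` form a nonzero stable subgroup, hence all of `V`
  let G : AddSubgroup H := V ⊓ (Module.End.eigenspace (actLinear hC z) c).toAddSubgroup
  have hG : IsStable σ G := by
    intro a x hx
    obtain ⟨hxV, hxz⟩ := AddSubgroup.mem_inf.mp hx
    refine AddSubgroup.mem_inf.mpr ⟨hVs a x hxV, ?_⟩
    rw [Submodule.mem_toAddSubgroup, Module.End.mem_eigenspace_iff, actLinear_apply] at hxz ⊢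
    rw [action_comm σ (hz a), hxz, action_smul hC]
  have hvG : (v : H) ∈ G :=
    ⟨v.2, Module.End.mem_eigenspace_iff.mpr (congrArg Subtype.val hv.apply_eq_smul)⟩
  rcases hVmin G hG inf_le_left with hG0 | hGV
  · exact absurd (hG0 ▸ hvG) (by simpa using hv.2)
  · exact ⟨c, fun x hx => Module.End.mem_eigenspace_iff.mp (hGV.symm ▸ hx : x ∈ G).2⟩

theorem IsSimpleStable.exists_algHom (hC : IsScalarCompatible C σ)
    {V : AddSubgroup H} (hV : IsSimpleStable σ V) :
    ∃ χ : Subalgebra.center C A →ₐ[C] C, ∀ z : Subalgebra.center C A, ∀ x ∈ V,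
      σ (op ↑z) x = χ z • x := by
  choose χ hχ using fun z : Subalgebra.center C A =>
    hV.exists_smul_eq hC fun a => (Subalgebra.mem_center_iff.mp z.2 a).symm
  obtain ⟨x₀, hx₀V, hx₀⟩ := (AddSubgroup.bot_or_exists_ne_zero V).resolve_left hV.2.1
  have hχ_eq : ∀ (z : Subalgebra.center C A) (t : C), σ (op ↑z) x₀ = t • x₀ → χ z = t :=
    fun z t h => smul_left_injective C hx₀ ((hχ z x₀ hx₀V).symm.trans h)
  refine ⟨{ toFun := χ
            map_one' := hχ_eq _ _ (by simp)
            map_mul' z w := hχ_eq _ _ ?_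
            map_zero' := hχ_eq _ _ (by simp)
            map_add' z w := hχ_eq _ _ ?_
            commutes' c := hχ_eq _ _ (hC c x₀) }, hχ⟩
  · rw [MulMemClass.coe_mul, action_mul_apply, hχ _ _ hx₀V, action_smul hC,
      hχ _ _ hx₀V, smul_smul]
  · rw [AddMemClass.coe_add, action_add_apply, hχ _ _ hx₀V, hχ _ _ hx₀V, add_smul]

end Schur

section Main

variable {C A B H : Type} [Field C] [Ring A] [Algebra C A] [Ring B] [AddCommGroup H] [Module C H]
  {σ : Aᵐᵒᵖ →+* AddMonoid.End H} {a₀ : A}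

lemma actLinear_pow_action_comm (hC : IsScalarCompatible C σ)
    (ha₀ : ∀ a, Commute a₀ a) (n : ℕ) (a : A) (x : H) :
    (actLinear hC a₀ ^ n) (σ (op a) x) = σ (op a) ((actLinear hC a₀ ^ n) x) := by
  rw [actLinear_pow_apply, actLinear_pow_apply, action_comm σ ((ha₀ a).pow_left n)]

lemma isStable_range_actLinear_pow (hC : IsScalarCompatible C σ)
    (ha₀ : ∀ a, Commute a₀ a) (n : ℕ) :
    IsStable σ (LinearMap.range (actLinear hC a₀ ^ n)).toAddSubgroup := by
  rintro a _ ⟨y, rfl⟩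
  exact ⟨σ (op a) y, actLinear_pow_action_comm hC ha₀ n a y⟩

theorem exists_isSimpleStable_of_not_isPowerTorsion [IsAlgClosed C] [FiniteDimensional C H]
    (hC : IsScalarCompatible C σ)
    (ha₀ : a₀ ∈ Subalgebra.center C A) (htor : ¬IsPowerTorsion σ a₀) :
    ∃ V, IsSimpleStable σ V ∧ ∃ χ : Subalgebra.center C A →ₐ[C] C,
      (∀ z : Subalgebra.center C A, ∀ x ∈ V, σ (op ↑z) x = χ z • x) ∧ χ ⟨a₀, ha₀⟩ ≠ 0 := by
  set E := actLinear hC a₀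
  have hW0 : LinearMap.range (E ^ finrank C H) ≠ ⊥ := by
    rwa [Ne, LinearMap.range_eq_bot, ← isPowerTorsion_iff hC]
  obtain ⟨V, hVW, hV⟩ := exists_isSimpleStable_le hC _
    (isStable_range_actLinear_pow hC (fun a => (Subalgebra.mem_center_iff.mp ha₀ a).symm) _) hW0
  obtain ⟨χ, hχ⟩ := hV.exists_algHom hC
  refine ⟨V, hV, χ, hχ, fun h0 => ?_⟩
  obtain ⟨x, hxV, hx0⟩ := (AddSubgroup.bot_or_exists_ne_zero V).resolve_left hV.2.1
  refine hx0 (E.eq_zero_of_mem_range_pow_finrank (hVW hxV) ?_)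
  simpa [E, h0] using hχ ⟨a₀, ha₀⟩ x hxV

variable {f : A →+* B}

theorem isPowerTorsion_of_forall_isLocAt_subsingleton [FiniteDimensional C H] (hf : Injective f)
    (hcomm : ∀ x, Commute (f a₀) x) (hunit : IsUnit (f a₀))
    (hgen : ∀ x, ∃ (a : A) (n : ℕ), x * f a₀ ^ n = f a)
    (hC : IsScalarCompatible C σ)
    (h : ∀ (L : Type) (_ : AddCommGroup L) (τ : Bᵐᵒᵖ →+* AddMonoid.End L) (ι : H →+ L),
      IsLocAt f σ τ ι → Subsingleton L) :
    IsPowerTorsion σ a₀ := by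
  set E := actLinear hC a₀
  set W := LinearMap.range (E ^ finrank C H)
  have ha₀ : ∀ a, Commute a₀ a := fun a => (hcomm (f a)).of_map hf
  have hW := isStable_range_actLinear_pow hC ha₀ (finrank C H)
  have hunitW : IsUnit (restrictAction σ _ hW (op a₀)) := by
    have hEW : ∀ x ∈ W, E x ∈ W := fun x hx => hW a₀ x hx
    have hE : IsUnit (E.restrict hEW) :=
      (LinearMap.isUnit_iff_ker_eq_bot _).mpr <| LinearMap.ker_eq_bot'.mpr fun x hx =>
        Subtype.ext (E.eq_zero_of_mem_range_pow_finrank x.2 (congrArg Subtype.val hx))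
    have hσE : restrictAction σ _ hW (op a₀) = (E.restrict hEW).toAddMonoidHom :=
      AddMonoidHom.ext fun x => rfl
    exact hσE ▸ LinearMap.isUnit_toAddMonoidHom hE
  obtain ⟨τ, hloc⟩ := isLocAt_of_surjective hf hcomm hunit hgen σ (restrictAction σ _ hW)
    (E ^ finrank C H).rangeRestrict.toAddMonoidHom (E ^ finrank C H).surjective_rangeRestrict
    (fun a x => Subtype.ext (actLinear_pow_action_comm hC ha₀ _ a x))
    (fun x hx => ⟨finrank C H, by rw [← actLinear_pow_apply hC]; exact congrArg Subtype.val hx⟩)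
    hunitW
  have := h W _ τ _ hloc
  exact (isPowerTorsion_iff hC).mpr <| LinearMap.ext fun x =>
    congrArg Subtype.val (Subsingleton.elim ((E ^ finrank C H).rangeRestrict x) 0)

theorem IsPowerTorsion.algHom_eq_zero (htor : IsPowerTorsion σ a₀)
    (ha₀ : a₀ ∈ Subalgebra.center C A)
    (χ : Subalgebra.center C A →ₐ[C] C) {x : H} (hx0 : x ≠ 0)
    (hx : ∀ z : Subalgebra.center C A, σ (op ↑z) x = χ z • x) : χ ⟨a₀, ha₀⟩ = 0 := by
  obtain ⟨n, hn⟩ := htor x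
  have hχn : χ ⟨a₀, ha₀⟩ ^ n • x = 0 := by
    rw [← map_pow, ← hx]
    exact hn
  exact (pow_eq_zero_iff'.mp ((smul_eq_zero.mp hχn).resolve_right hx0)).1

theorem isPowerTorsion_of_forall_algHom [IsAlgClosed C] [FiniteDimensional C H]
    (hC : IsScalarCompatible C σ)
    (ha₀ : a₀ ∈ Subalgebra.center C A)
    (h : ∀ χ : Subalgebra.center C A →ₐ[C] C,
      (∃ x : H, x ≠ 0 ∧ ∀ z : Subalgebra.center C A, σ (op ↑z) x = χ z • x) → χ ⟨a₀, ha₀⟩ = 0) :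
    IsPowerTorsion σ a₀ := by
  by_contra htor
  obtain ⟨V, hV, χ, hχ, hχ0⟩ := exists_isSimpleStable_of_not_isPowerTorsion hC ha₀ htor
  obtain ⟨x, hxV, hx0⟩ := (AddSubgroup.bot_or_exists_ne_zero V).resolve_left hV.2.1
  exact hχ0 (h χ ⟨x, hx0, fun z => hχ z x hxV⟩)

theorem isPowerTorsion_of_forall_isSimpleStable_subsingleton [IsAlgClosed C]
    [FiniteDimensional C H] (hf : Injective f) (hcomm : ∀ x, Commute (f a₀) x)
    (hunit : IsUnit (f a₀)) (hgen : ∀ x, ∃ (a : A) (n : ℕ), x * f a₀ ^ n = f a)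
    (hC : IsScalarCompatible C σ)
    (ha₀ : a₀ ∈ Subalgebra.center C A)
    (h : ∀ N : AddSubgroup H, IsStable σ N →
      (N ≠ ⊥ ∧ ∀ N' : AddSubgroup H, IsStable σ N' → N' ≤ N → N' = ⊥ ∨ N' = N) →
      ∀ σN : Aᵐᵒᵖ →+* AddMonoid.End N, (∀ (a : A) (x : N), (σN (op a) x : H) = σ (op a) x) →
      ∀ (L : Type) (_ : AddCommGroup L) (τ : Bᵐᵒᵖ →+* AddMonoid.End L) (ι : N →+ L),
        IsLocAt f σN τ ι → Subsingleton L) :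
    IsPowerTorsion σ a₀ := by
  by_contra htor
  obtain ⟨V, hV, χ, hχ, hχ0⟩ := exists_isSimpleStable_of_not_isPowerTorsion hC ha₀ htor
  set σV := restrictAction σ V hV.1
  have hunitV : IsUnit (σV (op a₀)) := by
    have hσV : σV (op a₀) = σV (op (algebraMap C A (χ ⟨a₀, ha₀⟩))) :=
      AddMonoidHom.ext fun x => Subtype.ext <| (hχ ⟨a₀, ha₀⟩ x x.2).trans (hC _ x).symm
    exact hσV ▸ (hχ0.isUnit.map (algebraMap C A)).op.map σV
  obtain ⟨τ, hloc⟩ := isLocAt_of_surjective hf hcomm hunit hgen σV σV (AddMonoidHom.id V)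
    surjective_id (fun _ _ => rfl) (fun m hm => ⟨0, by simpa using hm⟩) hunitV
  have := h V hV.1 hV.2 σV (fun _ _ => rfl) V _ τ _ hloc
  obtain ⟨x, hxV, hx0⟩ := (AddSubgroup.bot_or_exists_ne_zero V).resolve_left hV.2.1
  exact hx0 (congrArg Subtype.val (Subsingleton.elim (⟨x, hxV⟩ : V) 0))

end Main

theorem statement9_general {C : Type} [Field C] [IsAlgClosed C]
    {A B : Type} [Ring A] [Ring B] [Algebra C A] [Algebra C B]
    (f : A →ₐ[C] B) (hinj : Function.Injective f)
    (β : Bˣ) (hcentral : ∀ x : B, ↑β * x = x * ↑β)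
    (a₀ : A) (ha₀ : f a₀ = ↑β) (ha₀c : a₀ ∈ Subalgebra.center C A)
    (hgen : ∀ x : B, ∃ (a : A) (n : ℕ), x = f a * (↑β⁻¹ : B) ^ n)
    {H : Type} [AddCommGroup H] [Module C H] [FiniteDimensional C H]
    (σ : Aᵐᵒᵖ →+* AddMonoid.End H)
    (hCact : ∀ (c : C) (h : H), σ (op (algebraMap C A c)) h = c • h) :
    -- (i) : `H ⊗_A B = 0`
    let Pi : Prop := ∀ (L : Type) (_ : AddCommGroup L), ∀ (τ : Bᵐᵒᵖ →+* AddMonoid.End L),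
      ∀ ι : H →+ L, IsLocAt (f : A →+* B) σ τ ι → Subsingleton L
    -- (ii) : `N ⊗_A B = 0` for every simple `A`-submodule `N ⊆ H`
    let Pii : Prop := ∀ N : AddSubgroup H,
      (∀ (a : A) (x : H), x ∈ N → σ (op a) x ∈ N) →
      (N ≠ ⊥ ∧ ∀ N' : AddSubgroup H, (∀ (a : A) (x : H), x ∈ N' → σ (op a) x ∈ N') →
        N' ≤ N → N' = ⊥ ∨ N' = N) →
      ∀ σN : Aᵐᵒᵖ →+* AddMonoid.End ↥N,
        (∀ (a : A) (x : ↥N), (σN (op a) x : H) = σ (op a) ↑x) →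
        ∀ (L : Type) (_ : AddCommGroup L), ∀ (τ : Bᵐᵒᵖ →+* AddMonoid.End L),
          ∀ ι : ↥N →+ L, IsLocAt (f : A →+* B) σN τ ι → Subsingleton L
    -- (iii) : characters of the centre appearing in `H` kill `a₀`
    let Piii : Prop := ∀ χ : ↥(Subalgebra.center C A) →ₐ[C] C,
      (∃ h : H, h ≠ 0 ∧ ∀ z : ↥(Subalgebra.center C A), σ (op ↑z) h = χ z • h) →
      χ ⟨a₀, ha₀c⟩ = 0
    (Pi ↔ Pii) ∧ (Pi ↔ Piii) := by
  intro Pi Pii Piii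
  have hcomm : ∀ x, Commute ((f : A →+* B) a₀) x := fun x => by
    simpa [Commute, SemiconjBy, ha₀] using hcentral x
  have hunit : IsUnit ((f : A →+* B) a₀) := by simp [ha₀]
  have hgen' : ∀ x, ∃ (a : A) (n : ℕ), x * (f : A →+* B) a₀ ^ n = (f : A →+* B) a := by
    intro x
    obtain ⟨a, n, rfl⟩ := hgen x
    refine ⟨a, n, ?_⟩
    rw [AlgHom.coe_toRingHom, ha₀, mul_assoc, ← Units.val_pow_eq_pow_val,
      ← Units.val_pow_eq_pow_val, ← Units.val_mul, inv_pow, inv_mul_cancel, Units.val_one, mul_one]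
  have hPi : Pi ↔ IsPowerTorsion σ a₀ :=
    ⟨isPowerTorsion_of_forall_isLocAt_subsingleton hinj hcomm hunit hgen' hCact,
      fun htor _ _ _ _ hloc => hloc.subsingleton_of_isPowerTorsion hunit htor⟩
  have hPii : Pii ↔ IsPowerTorsion σ a₀ :=
    ⟨isPowerTorsion_of_forall_isSimpleStable_subsingleton hinj hcomm hunit hgen' hCact ha₀c,
      fun htor _ _ _ _ hσN _ _ _ _ hloc => hloc.subsingleton_of_isPowerTorsion hunit fun x =>
        (htor x).imp fun _ hn => Subtype.ext ((hσN _ x).trans hn)⟩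
  have hPiii : Piii ↔ IsPowerTorsion σ a₀ :=
    ⟨isPowerTorsion_of_forall_algHom hCact ha₀c,
      fun htor χ ⟨_, hx0, hx⟩ => htor.algHom_eq_zero ha₀c χ hx0 hx⟩
  exact ⟨hPi.trans hPii.symm, hPi.trans hPiii.symm⟩

theorem statement9 {C : Type} [Field C] [IsAlgClosed C]
    {A B : Type} [Ring A] [Ring B] [Algebra C A] [Algebra C B]
    (f : A →ₐ[C] B) (hinj : Function.Injective f)
    (β : Bˣ) (hcentral : ∀ x : B, ↑β * x = x * ↑β)
    (a₀ : A) (ha₀ : f a₀ = ↑β) (ha₀c : a₀ ∈ Subalgebra.center C A)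
    (hgen : ∀ x : B, ∃ (a : A) (n : ℕ), x = f a * (↑β⁻¹ : B) ^ n)
    {H : Type} [AddCommGroup H] [Module C H] [FiniteDimensional C H] [Nontrivial H]
    (σ : Aᵐᵒᵖ →+* AddMonoid.End H)
    (hCbil : ∀ (c : C) (a : A) (h : H), σ (op a) (c • h) = c • σ (op a) h)
    (hCact : ∀ (c : C) (h : H), σ (op (algebraMap C A c)) h = c • h) :
    -- (i) : `H ⊗_A B = 0`
    let Pi : Prop := ∀ (L : Type) (_ : AddCommGroup L), ∀ (τ : Bᵐᵒᵖ →+* AddMonoid.End L),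
      ∀ ι : H →+ L, IsLocAt (f : A →+* B) σ τ ι → Subsingleton L
    -- (ii) : `N ⊗_A B = 0` for every simple `A`-submodule `N ⊆ H`
    let Pii : Prop := ∀ N : AddSubgroup H,
      (∀ (a : A) (x : H), x ∈ N → σ (op a) x ∈ N) →
      (N ≠ ⊥ ∧ ∀ N' : AddSubgroup H, (∀ (a : A) (x : H), x ∈ N' → σ (op a) x ∈ N') →
        N' ≤ N → N' = ⊥ ∨ N' = N) →
      ∀ σN : Aᵐᵒᵖ →+* AddMonoid.End ↥N,
        (∀ (a : A) (x : ↥N), (σN (op a) x : H) = σ (op a) ↑x) →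
        ∀ (L : Type) (_ : AddCommGroup L), ∀ (τ : Bᵐᵒᵖ →+* AddMonoid.End L),
          ∀ ι : ↥N →+ L, IsLocAt (f : A →+* B) σN τ ι → Subsingleton L
    -- (iii) : characters of the centre appearing in `H` kill `a₀`
    let Piii : Prop := ∀ χ : ↥(Subalgebra.center C A) →ₐ[C] C,
      (∃ h : H, h ≠ 0 ∧ ∀ z : ↥(Subalgebra.center C A), σ (op ↑z) h = χ z • h) →
      χ ⟨a₀, ha₀c⟩ = 0
    (Pi ↔ Pii) ∧ (Pi ↔ Piii) :=
  statement9_general f hinj β hcentral a₀ ha₀ ha₀c hgen σ hCact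
end
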